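/- arXiv:2501.01963 — 9 statements merged into one kernel-verified Lean document; each statement's English description precedes it below -/
import Mathlib

section
/- Suppose that for every cell A_i of the partition 𝒫 one has P0(A_i \ T) > 0. Then every 𝒫-coarse posterior P for P0 satisfies P(T) < 1. In particular, if the proposition p is true in the true world (x0 ∈ T), full learning of p is impossible for any agent whose posterior is a 𝒫-coarse posterior. -/
open MeasureTheory

/-- A probability measure `P` is a `𝒫`-coarse posterior for `P0` (with `𝒫` the countable
partition `A : ι → Set X`) if `P ≪ P0` and the Radon–Nikodym derivative `dP/dP0` is
`P0`-a.e. constant on each cell `A i`. -/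
def IsCoarsePosterior {X : Type*} [MeasurableSpace X] {ι : Type*}
    (P0 P : Measure X) (A : ι → Set X) : Prop :=
  P ≪ P0 ∧ ∀ i, ∃ c : ENNReal, ∀ᵐ x ∂(P0.restrict (A i)), P.rnDeriv P0 x = c

/-- If every cell `A i` of the partition satisfies `P0 (A i \ T) > 0`, then any
`𝒫`-coarse posterior `P` for `P0` satisfies `P T < 1`; in particular, if `x0 ∈ T` (the
proposition is true in the true world), full learning (`P T = 1`) is impossible. -/
theorem coarse_posterior_no_full_learning_true
    {X : Type*} [MeasurableSpace X] {ι : Type*} [Countable ι]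
    (P0 P : Measure X) [IsProbabilityMeasure P0] [IsProbabilityMeasure P]
    (A : ι → Set X)
    (hAmeas : ∀ i, MeasurableSet (A i))
    (hAdisj : Pairwise (Function.onFun Disjoint A))
    (hAcover : (⋃ i, A i) = Set.univ)
    (hApos : ∀ i, 0 < P0 (A i))
    (T : Set X) (hT : MeasurableSet T)
    (x0 : X) (hx0 : x0 ∈ T)
    (hcoarse : IsCoarsePosterior P0 P A)
    (hTc : ∀ i, 0 < P0 (A i \ T)) :
    P T < 1 := by
  obtain ⟨hac, hconst⟩ := hcoarse
  by_contra h
  push_neg at h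
  have hPT : P T = 1 := le_antisymm prob_le_one h
  have hPTc : P Tᶜ = 0 := by
    have := prob_compl_eq_one_sub hT (μ := P)
    rw [hPT] at this
    simpa using this
  -- each cell has zero P-measure
  have hPA : ∀ i, P (A i) = 0 := by
    intro i
    obtain ⟨c, hc⟩ := hconst i
    have hint : ∀ (s : Set X), MeasurableSet s → s ⊆ A i →
        P s = c * P0 s := by
      intro s hs hsub
      have h1 : ∫⁻ x in s, P.rnDeriv P0 x ∂P0 = P s :=
        Measure.setLIntegral_rnDeriv hac s
      have h2 : (∀ᵐ x ∂(P0.restrict s), P.rnDeriv P0 x = c) :=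
        ae_restrict_of_ae_restrict_of_subset hsub hc
      have h3 : ∫⁻ x in s, P.rnDeriv P0 x ∂P0 = ∫⁻ _ in s, c ∂P0 :=
        lintegral_congr_ae h2
      rw [h3, setLIntegral_const] at h1
      exact h1.symm
    have hdiff : P (A i \ T) = 0 := by
      have hle : P (A i \ T) ≤ P Tᶜ :=
        measure_mono (fun x hx => hx.2)
      simpa [hPTc] using le_antisymm (hle.trans_eq hPTc) zero_le
    have hc0 : c = 0 := by
      have := hint (A i \ T) ((hAmeas i).diff hT) Set.diff_subset
      rw [hdiff] at this
      rcases (mul_eq_zero.mp this.symm) with h | h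
      · exact h
      · exact absurd h (hTc i).ne'
    rw [hint (A i) (hAmeas i) le_rfl, hc0, zero_mul]
  have huniv : P Set.univ = 0 := by
    rw [← hAcover]
    refine le_antisymm ?_ zero_le
    calc P (⋃ i, A i) ≤ ∑' i, P (A i) := measure_iUnion_le A
      _ = 0 := by simp [hPA]
  simp [measure_univ] at huniv
end

section
/- Suppose that for every cell A_i of the partition 𝒫 one has P0(T ∩ A_i) > 0. Then every 𝒫-coarse posterior P for P0 satisfies P(T) > 0. In particular, if the proposition p is false in the true world (x0 ∉ T), full learning of p is impossible for any agent whose posterior is a 𝒫-coarse posterior. -/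
open MeasureTheory

/-- If every cell `A i` of the partition satisfies `P0 (T ∩ A i) > 0`, then any
`𝒫`-coarse posterior `P` for `P0` satisfies `P T > 0`; in particular, if `x0 ∉ T` (the
proposition is false in the true world), full learning (`P T = 0`) is impossible. -/
theorem coarse_posterior_no_full_learning_false
    {X : Type*} [MeasurableSpace X] {ι : Type*} [Countable ι]
    (P0 P : Measure X) [IsProbabilityMeasure P0] [IsProbabilityMeasure P]
    (A : ι → Set X)
    (hAmeas : ∀ i, MeasurableSet (A i))
    (hAdisj : Pairwise (Function.onFun Disjoint A))
    (hAcover : (⋃ i, A i) = Set.univ)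
    (hApos : ∀ i, 0 < P0 (A i))
    (T : Set X) (hT : MeasurableSet T)
    (x0 : X) (hx0 : x0 ∉ T)
    (hcoarse : IsCoarsePosterior P0 P A)
    (hTc : ∀ i, 0 < P0 (T ∩ A i)) :
    0 < P T := by
  obtain ⟨hac, hconst⟩ := hcoarse
  choose c hc using hconst
  -- P of a set = integral of rnDeriv
  have hPs : ∀ s : Set X, MeasurableSet s → P s = ∫⁻ x in s, P.rnDeriv P0 x ∂P0 := by
    intro s hs
    rw [Measure.setLIntegral_rnDeriv hac]
  have hPA : ∀ i, P (A i) = c i * P0 (A i) := by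
    intro i
    rw [hPs (A i) (hAmeas i), lintegral_congr_ae (hc i)]
    simp [lintegral_const, Measure.restrict_apply, mul_comm]
  -- some cell has P (A i) > 0
  have hsum : ∑' i, P (A i) = 1 := by
    rw [← measure_iUnion hAdisj hAmeas, hAcover, measure_univ]
  have hex : ∃ i, 0 < P (A i) := by
    by_contra h
    push_neg at h
    have : ∀ i, P (A i) = 0 := fun i => le_antisymm (h i) zero_le
    simp [this] at hsum
  obtain ⟨i, hi⟩ := hex
  have hci : 0 < c i := by
    rcases (zero_le : 0 ≤ c i).lt_or_eq with h | h
    · exact h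
    · rw [hPA i, ← h, zero_mul] at hi; exact absurd rfl hi.ne'
  -- P (T ∩ A i) = c i * P0 (T ∩ A i)
  have hmeasTA : MeasurableSet (T ∩ A i) := hT.inter (hAmeas i)
  have hae : ∀ᵐ x ∂(P0.restrict (T ∩ A i)), P.rnDeriv P0 x = c i :=
    ae_mono (Measure.restrict_mono Set.inter_subset_right le_rfl) (hc i)
  have hPTA : P (T ∩ A i) = c i * P0 (T ∩ A i) := by
    rw [hPs _ hmeasTA, lintegral_congr_ae hae]
    simp [lintegral_const, Measure.restrict_apply, mul_comm]
  have : 0 < P (T ∩ A i) := by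
    rw [hPTA]
    exact ENNReal.mul_pos hci.ne' (hTc i).ne'
  exact this.trans_le (measure_mono Set.inter_subset_left)
end

section
/- Suppose the true world x0 belongs to a cell A of the partition 𝒫 with {x0} ⊊ A and P0(A \ {x0}) > 0, and that {x0} is measurable. Then every 𝒫-coarse posterior P for P0 satisfies P({x0}) < 1, so full knowledge acquisition is impossible. -/
open MeasureTheory

/-- If the true world `x0` lies in a cell `A i0` with `{x0} ⊊ A i0` and
`P0 (A i0 \ {x0}) > 0`, and `{x0}` is measurable, then any `𝒫`-coarse posterior `P`
satisfies `P {x0} < 1`, so full knowledge acquisition is impossible. -/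
theorem coarse_posterior_no_full_knowledge
    {X : Type*} [MeasurableSpace X] {ι : Type*} [Countable ι]
    (P0 P : Measure X) [IsProbabilityMeasure P0] [IsProbabilityMeasure P]
    (A : ι → Set X)
    (hAmeas : ∀ i, MeasurableSet (A i))
    (hAdisj : Pairwise (Function.onFun Disjoint A))
    (hAcover : (⋃ i, A i) = Set.univ)
    (hApos : ∀ i, 0 < P0 (A i))
    (x0 : X) (hx0meas : MeasurableSet ({x0} : Set X))
    (i0 : ι) (hssub : ({x0} : Set X) ⊂ A i0)
    (hpos : 0 < P0 (A i0 \ {x0}))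
    (hcoarse : IsCoarsePosterior P0 P A) :
    P {x0} < 1 := by
  obtain ⟨hac, hconst⟩ := hcoarse
  obtain ⟨c, hc⟩ := hconst i0
  have hsub : ({x0} : Set X) ⊆ A i0 := hssub.1
  have hdiffmeas : MeasurableSet (A i0 \ {x0}) := (hAmeas i0).diff hx0meas
  -- values of P on the two pieces
  have hset : ∀ s : Set X, MeasurableSet s → s ⊆ A i0 → P s = c * P0 s := by
    intro s hsmeas hs
    have h1 : P s = ∫⁻ x in s, P.rnDeriv P0 x ∂P0 :=
      (Measure.setLIntegral_rnDeriv hac s).symm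
    have h2 : ∀ᵐ x ∂(P0.restrict s), P.rnDeriv P0 x = c :=
      ae_restrict_of_ae_restrict_of_subset hs hc
    rw [h1, lintegral_congr_ae h2, setLIntegral_const]
  have hPx : P {x0} = c * P0 {x0} := hset _ hx0meas hsub
  have hPd : P (A i0 \ {x0}) = c * P0 (A i0 \ {x0}) :=
    hset _ hdiffmeas Set.diff_subset
  have hle1 : P {x0} ≤ 1 := prob_le_one
  rcases lt_or_eq_of_le hle1 with h | h
  · exact h
  exfalso
  have hcne : c ≠ 0 := by
    intro hc0
    rw [hPx, hc0, zero_mul] at h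
    exact zero_ne_one h
  have hPdpos : 0 < P (A i0 \ {x0}) := by
    rw [hPd]
    exact ENNReal.mul_pos hcne hpos.ne'
  have hunion : ({x0} : Set X) ∪ (A i0 \ {x0}) = A i0 := Set.union_diff_cancel hsub
  have hPA : P (A i0) = P {x0} + P (A i0 \ {x0}) := by
    have := measure_union (μ := P) (Set.disjoint_sdiff_right (s := ({x0} : Set X)) (t := A i0)) hdiffmeas
    rwa [hunion] at this
  have : (1 : ENNReal) < P (A i0) := by
    rw [hPA, ← h]
    exact ENNReal.lt_add_right (by rw [h]; exact ENNReal.one_ne_top) hPdpos.ne'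
  exact absurd (prob_le_one (μ := P) (s := A i0)) (not_le.mpr this)
end

section
/- Fix λ ∈ ℝ^n and let Q_λ be the corresponding Gibbs distribution. Then for every probability measure Q on (X, 𝓕) that is absolutely continuous with respect to P0 and satisfies the moment constraints ∫_X f_i dQ = ∫_X f_i dQ_λ for all i = 1, …, n, the Kullback–Leibler divergence satisfies KL(Q ‖ P0) ≥ KL(Q_λ ‖ P0), with equality if and only if Q = Q_λ. In other words, the Gibbs distribution Q_λ is the unique minimizer of KL(· ‖ P0) among all probability measures absolutely continuous with respect to P0 having the same expected feature vector as Q_λ. -/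
open MeasureTheory Classical

/-- The partition function `Z_λ = ∫ exp(λ·f(x)) dP0(x)`. -/
noncomputable def gibbsZ {X : Type*} [MeasurableSpace X] (P0 : Measure X)
    {n : ℕ} (f : Fin n → X → ℝ) (lam : Fin n → ℝ) : ℝ :=
  ∫ x, Real.exp (∑ i, lam i * f i x) ∂P0

/-- The Gibbs distribution `Q_λ` with density `exp(λ·f(x))/Z_λ` with respect to `P0`. -/
noncomputable def gibbsMeasure {X : Type*} [MeasurableSpace X] (P0 : Measure X)
    {n : ℕ} (f : Fin n → X → ℝ) (lam : Fin n → ℝ) : Measure X :=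
  P0.withDensity
    (fun x => ENNReal.ofReal (Real.exp (∑ i, lam i * f i x) / gibbsZ P0 f lam))

/-- The Kullback–Leibler divergence `KL(Q ‖ P) = ∫ log (dQ/dP) dQ`, set to `∞` when `Q` is
not absolutely continuous with respect to `P` or the log-likelihood ratio is not
`Q`-integrable. -/
noncomputable def klDiv {X : Type*} [MeasurableSpace X] (Q P : Measure X) : ENNReal :=
  if Q ≪ P ∧ Integrable (fun x => Real.log ((Q.rnDeriv P x).toReal)) Q then
    ENNReal.ofReal (∫ x, Real.log ((Q.rnDeriv P x).toReal) ∂Q)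
  else ⊤

lemma klDiv_eq_llr {X : Type*} [MeasurableSpace X] (Q P : Measure X) :
    klDiv Q P = if Q ≪ P ∧ Integrable (llr Q P) Q then
      ENNReal.ofReal (∫ x, llr Q P x ∂Q) else ⊤ := rfl

lemma gibbs_ineq {X : Type*} [MeasurableSpace X] (μ ν : Measure X)
    [IsProbabilityMeasure μ] [IsProbabilityMeasure ν] (hμν : μ ≪ ν)
    (h_int : Integrable (llr μ ν) μ) :
    0 ≤ ∫ x, llr μ ν x ∂μ ∧ (∫ x, llr μ ν x ∂μ = 0 → μ = ν) := by
  set d := μ.rnDeriv ν with hd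
  have hd_meas : Measurable d := Measure.measurable_rnDeriv μ ν
  have hpos : ∀ᵐ x ∂μ, 0 < d x := Measure.rnDeriv_pos hμν
  have hfin : ∀ᵐ x ∂μ, d x < ⊤ := hμν.ae_le (Measure.rnDeriv_lt_top μ ν)
  have hwd : ν.withDensity d = μ := Measure.withDensity_rnDeriv_eq μ ν hμν
  -- lintegral of d⁻¹ over μ is at most 1
  have hL : ∫⁻ x, (d x)⁻¹ ∂μ ≤ 1 := by
    rw [← hwd, lintegral_withDensity_eq_lintegral_mul _ hd_meas (g := fun x => (d x)⁻¹) hd_meas.inv]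
    calc ∫⁻ x, (d * fun x => (d x)⁻¹) x ∂ν ≤ ∫⁻ _, 1 ∂ν :=
          lintegral_mono fun x => ENNReal.mul_inv_le_one (d x)
      _ = 1 := by simp
  have hinv_fin : ∀ᵐ x ∂μ, (d x)⁻¹ < ⊤ := by
    filter_upwards [hpos] with x hx
    simpa [ENNReal.inv_lt_top] using hx
  have h_int_inv : Integrable (fun x => ((d x)⁻¹).toReal) μ :=
    integrable_toReal_of_lintegral_ne_top hd_meas.inv.aemeasurable
      (hL.trans_lt ENNReal.one_lt_top).ne
  have h_integral_inv : ∫ x, ((d x)⁻¹).toReal ∂μ ≤ 1 := by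
    rw [integral_toReal (f := fun x => (d x)⁻¹) hd_meas.inv.aemeasurable hinv_fin]
    exact ENNReal.toReal_le_of_le_ofReal zero_le_one (by simpa using hL)
  set g : X → ℝ := fun x => ((d x)⁻¹).toReal - 1 + llr μ ν x with hg
  have hg_int : Integrable g μ := (h_int_inv.sub (integrable_const 1)).add h_int
  have hg_nonneg : ∀ᵐ x ∂μ, 0 ≤ g x := by
    filter_upwards [hpos, hfin] with x h1 h2
    have ht : 0 < (d x).toReal := ENNReal.toReal_pos h1.ne' h2.ne
    have hlog : Real.log ((d x).toReal)⁻¹ ≤ ((d x).toReal)⁻¹ - 1 :=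
      Real.log_le_sub_one_of_pos (inv_pos.mpr ht)
    rw [Real.log_inv] at hlog
    simp only [hg, llr, ENNReal.toReal_inv]
    linarith
  have hg_integral : ∫ x, g x ∂μ = ∫ x, ((d x)⁻¹).toReal ∂μ - 1 + ∫ x, llr μ ν x ∂μ := by
    have h1 : Integrable (fun x => ((d x)⁻¹).toReal - 1) μ := h_int_inv.sub (integrable_const 1)
    calc ∫ x, g x ∂μ = ∫ x, (((d x)⁻¹).toReal - 1) + llr μ ν x ∂μ := rfl
      _ = ∫ x, (((d x)⁻¹).toReal - 1) ∂μ + ∫ x, llr μ ν x ∂μ := integral_add h1 h_int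
      _ = ∫ x, ((d x)⁻¹).toReal ∂μ - 1 + ∫ x, llr μ ν x ∂μ := by
          rw [integral_sub h_int_inv (integrable_const 1)]; simp
  have hg_nonneg' : 0 ≤ ∫ x, g x ∂μ := integral_nonneg_of_ae hg_nonneg
  constructor
  · linarith
  intro h0
  have hg0 : ∫ x, g x ∂μ = 0 := by linarith
  have hgz : g =ᵐ[μ] 0 := (integral_eq_zero_iff_of_nonneg_ae hg_nonneg hg_int).mp hg0
  have hμ1 : ∀ᵐ x ∂μ, d x = 1 := by
    filter_upwards [hpos, hfin, hgz] with x h1 h2 h3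
    have ht : 0 < (d x).toReal := ENNReal.toReal_pos h1.ne' h2.ne
    have h3' : ((d x).toReal)⁻¹ - 1 + Real.log ((d x).toReal) = 0 := by
      simpa [hg, llr, ENNReal.toReal_inv] using h3
    have htone : (d x).toReal = 1 := by
      by_contra hne
      have : Real.log ((d x).toReal)⁻¹ < ((d x).toReal)⁻¹ - 1 :=
        Real.log_lt_sub_one_of_pos (inv_pos.mpr ht) (by
          simp only [ne_eq, inv_eq_one]; exact hne)
      rw [Real.log_inv] at this
      linarith
    exact (ENNReal.toReal_eq_one_iff _).mp htone
  -- from μ-a.e. d = 1, deduce ν-a.e. d = 1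
  set t : Set X := {x | d x ≠ 1} with htdef
  have ht_meas : MeasurableSet t := (hd_meas (measurableSet_singleton 1)).compl
  have hμt : μ t = 0 := by
    have := ae_iff.mp hμ1
    simpa [htdef] using this
  have hνt0 : ∫⁻ x in t, d x ∂ν = 0 := by
    rw [Measure.setLIntegral_rnDeriv hμν]; exact hμt
  have h1' : ∫⁻ x, d x ∂ν = 1 := by
    rw [Measure.lintegral_rnDeriv hμν]; simp
  have hsplit : ∫⁻ x in tᶜ, d x ∂ν = ν tᶜ := by
    rw [setLIntegral_congr_fun ht_meas.compl (fun x hx => ?_), setLIntegral_one]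
    simpa [htdef] using hx
  have hνtc : ν tᶜ = 1 := by
    have := lintegral_add_compl d ht_meas (μ := ν)
    rw [hνt0, hsplit, zero_add] at this
    exact this.trans h1'
  have hνt : ν t = 0 := by
    have h := measure_add_measure_compl (μ := ν) ht_meas
    rw [hνtc, measure_univ] at h
    have := ENNReal.eq_sub_of_add_eq ENNReal.one_ne_top h
    simpa using this
  have hν1 : d =ᵐ[ν] 1 := by
    filter_upwards [measure_eq_zero_iff_ae_notMem.mp hνt] with x hx
    simpa [htdef] using hx
  rw [← hwd, withDensity_congr_ae hν1, withDensity_one]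

/-- the Gibbs distribution `Q_λ` is the unique minimizer of `KL(· ‖ P0)` among
all probability measures `Q ≪ P0` with the same expected feature vector as `Q_λ`. -/
theorem gibbs_minimizes_klDiv
    {X : Type*} [MeasurableSpace X] (P0 : Measure X) [IsProbabilityMeasure P0]
    {n : ℕ} (f : Fin n → X → ℝ)
    (hmeas : ∀ i, Measurable (f i))
    (hbd : ∃ C : ℝ, ∀ i x, |f i x| ≤ C)
    (lam : Fin n → ℝ)
    (Q : Measure X) [IsProbabilityMeasure Q] (hac : Q ≪ P0)
    (hmom : ∀ i, ∫ x, f i x ∂Q = ∫ x, f i x ∂(gibbsMeasure P0 f lam)) :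
    klDiv (gibbsMeasure P0 f lam) P0 ≤ klDiv Q P0 ∧
      (klDiv Q P0 = klDiv (gibbsMeasure P0 f lam) P0 ↔ Q = gibbsMeasure P0 f lam) := by
  obtain ⟨C, hC⟩ := hbd
  set F : X → ℝ := fun x => ∑ i, lam i * f i x with hF
  have hF_meas : Measurable F := Finset.measurable_sum _ (fun i _ => (hmeas i).const_mul _)
  set B : ℝ := ∑ i : Fin n, |lam i| * C with hB
  have hFbd : ∀ x, |F x| ≤ B := fun x => by
    calc |F x| ≤ ∑ i, |lam i * f i x| := Finset.abs_sum_le_sum_abs _ _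
      _ ≤ ∑ i, |lam i| * C := Finset.sum_le_sum fun i _ => by
            rw [abs_mul]; exact mul_le_mul_of_nonneg_left (hC i x) (abs_nonneg _)
  have h_int_f : ∀ (μ : Measure X) [IsProbabilityMeasure μ] (i : Fin n),
      Integrable (f i) μ := fun μ _ i =>
    Integrable.mono' (integrable_const C) (hmeas i).aestronglyMeasurable (ae_of_all _ (hC i))
  have h_int_F : ∀ (μ : Measure X) [IsProbabilityMeasure μ], Integrable F μ := fun μ _ =>
    Integrable.mono' (integrable_const B) hF_meas.aestronglyMeasurable (ae_of_all _ hFbd)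
  have h_int_exp : Integrable (fun x => Real.exp (F x)) P0 :=
    Integrable.mono' (integrable_const (Real.exp B)) hF_meas.exp.aestronglyMeasurable
      (ae_of_all _ fun x => by
        rw [Real.norm_eq_abs, abs_of_pos (Real.exp_pos _)]
        exact Real.exp_le_exp.mpr ((abs_le.mp (hFbd x)).2))
  have hG : gibbsMeasure P0 f lam = P0.tilted F := rfl
  rw [hG] at hmom ⊢
  set ν := P0.tilted F with hν
  haveI : IsProbabilityMeasure ν := isProbabilityMeasure_tilted h_int_exp
  have hνP : ν ≪ P0 := tilted_absolutelyContinuous P0 F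
  have hllr_P0 : (llr ν P0) =ᵐ[P0] fun x => F x - Real.log (∫ x, Real.exp (F x) ∂P0) :=
    log_rnDeriv_tilted_left_self h_int_exp
  have hllr_ν : (llr ν P0) =ᵐ[ν] fun x => F x - Real.log (∫ x, Real.exp (F x) ∂P0) :=
    hνP.ae_le hllr_P0
  have h_int_llrν : Integrable (llr ν P0) ν :=
    Integrable.congr ((h_int_F ν).sub (integrable_const _)) hllr_ν.symm
  have h_val_ν : ∫ x, llr ν P0 x ∂ν
      = ∫ x, F x ∂ν - Real.log (∫ x, Real.exp (F x) ∂P0) := by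
    rw [integral_congr_ae hllr_ν, integral_sub (h_int_F ν) (integrable_const _)]
    simp
  have hklν : klDiv ν P0 = ENNReal.ofReal (∫ x, llr ν P0 x ∂ν) := by
    rw [klDiv_eq_llr, if_pos ⟨hνP, h_int_llrν⟩]
  have hFmom : ∫ x, F x ∂Q = ∫ x, F x ∂ν := by
    simp only [hF]
    rw [integral_finset_sum _ (fun i _ => (h_int_f Q i).const_mul _),
      integral_finset_sum _ (fun i _ => (h_int_f ν i).const_mul _)]
    exact Finset.sum_congr rfl fun i _ => by rw [integral_const_mul, integral_const_mul, hmom i]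
  by_cases hQint : Integrable (llr Q P0) Q
  · have hQν : Q ≪ ν := hac.trans (absolutelyContinuous_tilted h_int_exp)
    have h_int_llrQν : Integrable (llr Q ν) Q :=
      integrable_llr_tilted_right hac (h_int_F Q) hQint h_int_exp
    have h_key : ∫ x, llr Q ν x ∂Q
        = ∫ x, llr Q P0 x ∂Q - ∫ x, F x ∂Q + Real.log (∫ x, Real.exp (F x) ∂P0) :=
      integral_llr_tilted_right hac (h_int_F Q) h_int_exp hQint
    obtain ⟨hpos1, heq1⟩ := gibbs_ineq Q ν hQν h_int_llrQν
    obtain ⟨hpos2, -⟩ := gibbs_ineq ν P0 hνP h_int_llrν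
    obtain ⟨hpos3, -⟩ := gibbs_ineq Q P0 hac hQint
    have hklQ : klDiv Q P0 = ENNReal.ofReal (∫ x, llr Q P0 x ∂Q) := by
      rw [klDiv_eq_llr, if_pos ⟨hac, hQint⟩]
    have hdecomp : ∫ x, llr Q P0 x ∂Q = ∫ x, llr Q ν x ∂Q + ∫ x, llr ν P0 x ∂ν := by
      rw [h_val_ν]; linarith [h_key, hFmom]
    refine ⟨?_, fun h => ?_, fun h => by rw [h]⟩
    · rw [hklν, hklQ]
      exact ENNReal.ofReal_le_ofReal (by linarith)
    · rw [hklQ, hklν] at h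
      have h' := (ENNReal.ofReal_eq_ofReal_iff hpos3 hpos2).mp h
      exact heq1 (by linarith)
  · have hklQtop : klDiv Q P0 = ⊤ := by
      rw [klDiv_eq_llr, if_neg]
      rintro ⟨-, h⟩; exact hQint h
    refine ⟨by rw [hklQtop]; exact le_top, fun h => ?_, fun h => ?_⟩
    · rw [hklQtop, hklν] at h
      exact absurd h.symm (ENNReal.ofReal_ne_top)
    · exact absurd (by rw [h]; exact h_int_llrν) hQint
end

section
/- Assume the features are not P0-almost surely affinely dependent, i.e., there is no nonzero vector a ∈ ℝ^n such that the function x ↦ a·f(x) is P0-almost everywhere equal to a constant. Then the mean map λ ↦ (∫_X f_1 dQ_λ, …, ∫_X f_n dQ_λ) from ℝ^n to ℝ^n is injective: distinct parameter vectors λ ≠ λ' yield Gibbs distributions with distinct expected feature vectors. -/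
open MeasureTheory

/-- `t ≤ t * exp t` for all real `t`. -/
lemma le_self_mul_exp (t : ℝ) : t ≤ t * Real.exp t := by
  rcases le_or_gt 0 t with h | h
  · nlinarith [Real.add_one_le_exp t]
  · have h1 : Real.exp t ≤ 1 := Real.exp_le_one_iff.2 h.le
    nlinarith [Real.exp_pos t]

/-- if no nontrivial affine combination of the features is `P0`-a.e. constant,
then the mean map `λ ↦ (∫ f_1 dQ_λ, …, ∫ f_n dQ_λ)` is injective: distinct parameters give
Gibbs distributions with distinct expected feature vectors. -/
theorem gibbs_mean_map_injective
    {X : Type*} [MeasurableSpace X] (P0 : Measure X) [IsProbabilityMeasure P0]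
    {n : ℕ} (f : Fin n → X → ℝ)
    (hmeas : ∀ i, Measurable (f i))
    (hbd : ∃ C : ℝ, ∀ i x, |f i x| ≤ C)
    (hindep : ∀ a : Fin n → ℝ, a ≠ 0 →
      ¬ ∃ c : ℝ, ∀ᵐ x ∂P0, (∑ i, a i * f i x) = c) :
    Function.Injective
      (fun lam : Fin n → ℝ => fun i => ∫ x, f i x ∂(gibbsMeasure P0 f lam)) := by
  obtain ⟨C0, hC0⟩ := hbd
  set C : ℝ := max C0 0 with hCdef
  have hCbd : ∀ i x, |f i x| ≤ C := fun i x => (hC0 i x).trans (le_max_left _ _)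
  -- measurability and bound for the linear statistics
  have hSmeas : ∀ lam : Fin n → ℝ, Measurable (fun x => ∑ i, lam i * f i x) :=
    fun lam => Finset.measurable_sum _ (fun i _ => (hmeas i).const_mul _)
  have hSbd : ∀ (lam : Fin n → ℝ) (x : X), |∑ i, lam i * f i x| ≤ (∑ i, |lam i|) * C := by
    intro lam x
    calc |∑ i, lam i * f i x| ≤ ∑ i, |lam i * f i x| := Finset.abs_sum_le_sum_abs _ _
      _ ≤ ∑ i, |lam i| * C := by
          refine Finset.sum_le_sum fun i _ => ?_
          rw [abs_mul]
          exact mul_le_mul_of_nonneg_left (hCbd i x) (abs_nonneg _)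
      _ = (∑ i, |lam i|) * C := (Finset.sum_mul _ _ _).symm
  -- integrability of bounded measurable functions
  have hint : ∀ (g : X → ℝ), Measurable g → ∀ B : ℝ, (∀ x, |g x| ≤ B) → Integrable g P0 := by
    intro g hg B hB
    exact (integrable_const B).mono' hg.aestronglyMeasurable
      (Filter.Eventually.of_forall fun x => by simpa [Real.norm_eq_abs] using hB x)
  have hexpint : ∀ lam : Fin n → ℝ, Integrable (fun x => Real.exp (∑ i, lam i * f i x)) P0 := by
    intro lam
    refine hint _ (hSmeas lam).exp (Real.exp ((∑ i, |lam i|) * C)) fun x => ?_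
    rw [abs_of_pos (Real.exp_pos _)]
    exact Real.exp_le_exp.2 ((abs_le.1 (hSbd lam x)).2)
  -- positivity of the partition function
  have hZpos : ∀ lam : Fin n → ℝ, 0 < gibbsZ P0 f lam := by
    intro lam
    have h1 : Real.exp (-((∑ i, |lam i|) * C)) ≤ gibbsZ P0 f lam := by
      rw [gibbsZ]
      calc Real.exp (-((∑ i, |lam i|) * C))
          = ∫ _x, Real.exp (-((∑ i, |lam i|) * C)) ∂P0 := by simp
        _ ≤ ∫ x, Real.exp (∑ i, lam i * f i x) ∂P0 :=
            integral_mono (integrable_const _) (hexpint lam)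
              (fun x => Real.exp_le_exp.2 ((abs_le.1 (hSbd lam x)).1))
    exact lt_of_lt_of_le (Real.exp_pos _) h1
  -- the weights
  set w : (Fin n → ℝ) → X → ℝ :=
    fun mu x => Real.exp (∑ i, mu i * f i x) / gibbsZ P0 f mu with hwdef
  have hwnn : ∀ mu x, 0 ≤ w mu x := fun mu x =>
    div_nonneg (Real.exp_pos _).le (hZpos mu).le
  have hwpos : ∀ mu x, 0 < w mu x := fun mu x =>
    div_pos (Real.exp_pos _) (hZpos mu)
  have hwmeas : ∀ mu, Measurable (w mu) := fun mu => (hSmeas mu).exp.div_const _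
  have hwbd : ∀ mu x, w mu x ≤ Real.exp ((∑ i, |mu i|) * C) / gibbsZ P0 f mu := fun mu x =>
    div_le_div_of_nonneg_right ((Real.exp_le_exp.2 ((abs_le.1 (hSbd mu x)).2))) (hZpos mu).le
  -- integrability of weighted bounded functions
  have hwint : ∀ (mu : Fin n → ℝ) (g : X → ℝ), Measurable g → ∀ B : ℝ, (∀ x, |g x| ≤ B) →
      Integrable (fun x => w mu x * g x) P0 := by
    intro mu g hg B hB
    refine hint _ ((hwmeas mu).mul hg) (Real.exp ((∑ i, |mu i|) * C) / gibbsZ P0 f mu * B)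
      fun x => ?_
    rw [abs_mul, abs_of_nonneg (hwnn mu x)]
    exact mul_le_mul (hwbd mu x) (hB x) (abs_nonneg _)
      (div_nonneg (Real.exp_pos _).le (hZpos mu).le)
  -- total mass one
  have hw1 : ∀ mu : Fin n → ℝ, ∫ x, w mu x ∂P0 = 1 := by
    intro mu
    simp only [hwdef]
    rw [integral_div]
    exact div_self (hZpos mu).ne'
  -- integrals against the Gibbs measure
  have hQint : ∀ (mu : Fin n → ℝ) (g : X → ℝ),
      ∫ x, g x ∂(gibbsMeasure P0 f mu) = ∫ x, w mu x * g x ∂P0 := by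
    intro mu g
    rw [gibbsMeasure]
    have hm : Measurable (fun x => Real.toNNReal (w mu x)) := (hwmeas mu).real_toNNReal
    have he : (fun x => ENNReal.ofReal (Real.exp (∑ i, mu i * f i x) / gibbsZ P0 f mu))
        = fun x => ((Real.toNNReal (w mu x) : NNReal) : ENNReal) := by
      funext x; rfl
    rw [he, integral_withDensity_eq_integral_smul hm g]
    congr 1
    funext x
    rw [NNReal.smul_def, smul_eq_mul, Real.coe_toNNReal _ (hwnn mu x)]
  -- the main argument
  intro lam lam' h
  by_contra hne
  set a : Fin n → ℝ := lam - lam' with ha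
  have ha0 : a ≠ 0 := sub_ne_zero.2 hne
  set φ : X → ℝ := fun x => ∑ i, a i * f i x with hφ
  have hφbd : ∀ x, |φ x| ≤ (∑ i, |a i|) * C := fun x => hSbd a x
  have hφmeas : Measurable φ := hSmeas a
  have hmean : ∀ i, ∫ x, w lam x * f i x ∂P0 = ∫ x, w lam' x * f i x ∂P0 := by
    intro i
    have := congrFun h i
    simp only at this
    rw [hQint lam (f i), hQint lam' (f i)] at this
    exact this
  have hsum : ∀ mu : Fin n → ℝ,
      ∫ x, w mu x * φ x ∂P0 = ∑ i, a i * ∫ x, w mu x * f i x ∂P0 := by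
    intro mu
    have h1 : (fun x => w mu x * φ x) = fun x => ∑ i, a i * (w mu x * f i x) := by
      funext x
      simp only [hφ, Finset.mul_sum]
      exact Finset.sum_congr rfl fun i _ => by ring
    rw [h1, integral_finset_sum]
    · exact Finset.sum_congr rfl fun i _ => integral_const_mul _ _
    · intro i _
      exact ((hwint mu (f i) (hmeas i) C (hCbd i))).const_mul _
  have hφmean : ∫ x, w lam x * φ x ∂P0 = ∫ x, w lam' x * φ x ∂P0 := by
    rw [hsum lam, hsum lam']
    exact Finset.sum_congr rfl fun i _ => by rw [hmean i]
  set m : ℝ := ∫ x, w lam' x * φ x ∂P0 with hm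
  set ψ : X → ℝ := fun x => φ x - m with hψ
  have hψmeas : Measurable ψ := hφmeas.sub measurable_const
  set Bψ : ℝ := (∑ i, |a i|) * C + |m| with hBψ
  have hψbd : ∀ x, |ψ x| ≤ Bψ := by
    intro x
    calc |ψ x| ≤ |φ x| + |m| := abs_sub _ _
      _ ≤ Bψ := by simpa [hBψ] using add_le_add_right (hφbd x) |m|
  -- integrals of w mu * ψ are zero
  have hkey : ∀ mu : Fin n → ℝ, (∫ x, w mu x * φ x ∂P0 = m) →
      ∫ x, w mu x * ψ x ∂P0 = 0 := by
    intro mu hmm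
    have h1 : (fun x => w mu x * ψ x) = fun x => w mu x * φ x - w mu x * m := by
      funext x; simp only [hψ]; ring
    rw [h1, integral_sub (hwint mu φ hφmeas _ hφbd)
      ((hwint mu (fun _ => m) measurable_const |m| (fun _ => le_refl _))), hmm,
      integral_mul_const, hw1, one_mul, sub_self]
  have hψlam : ∫ x, w lam x * ψ x ∂P0 = 0 := hkey lam (hφmean.trans hm.symm ▸ rfl)
  have hψlam' : ∫ x, w lam' x * ψ x ∂P0 = 0 := hkey lam' rfl
  -- weighted integral of ψ e^ψ is also zero
  have hid : (fun x => w lam' x * (ψ x * Real.exp (ψ x)))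
      = fun x => (gibbsZ P0 f lam / gibbsZ P0 f lam' * Real.exp (-m)) * (w lam x * ψ x) := by
    funext x
    have hφd : φ x = (∑ i, lam i * f i x) - (∑ i, lam' i * f i x) := by
      simp only [hφ, ha, Pi.sub_apply, sub_mul, Finset.sum_sub_distrib]
    have he : Real.exp (ψ x) =
        Real.exp (∑ i, lam i * f i x) / Real.exp (∑ i, lam' i * f i x) * Real.exp (-m) := by
      rw [← Real.exp_sub, ← Real.exp_add]
      congr 1
      simp only [hψ, hφd]
      ring
    simp only [hwdef]
    rw [he]
    field_simp [Real.exp_ne_zero, (hZpos lam).ne', (hZpos lam').ne']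
  have hψexp : ∫ x, w lam' x * (ψ x * Real.exp (ψ x)) ∂P0 = 0 := by
    rw [hid, integral_const_mul, hψlam, mul_zero]
  -- the nonnegative gap function
  have hψeint : Integrable (fun x => w lam' x * (ψ x * Real.exp (ψ x))) P0 := by
    refine hwint lam' _ (hψmeas.mul hψmeas.exp) (Bψ * Real.exp Bψ) fun x => ?_
    rw [abs_mul, abs_of_pos (Real.exp_pos _)]
    have h2 : Real.exp (ψ x) ≤ Real.exp Bψ :=
      Real.exp_le_exp.2 ((abs_le.1 (hψbd x)).2)
    exact mul_le_mul (hψbd x) h2 (Real.exp_pos _).le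
      (le_trans (abs_nonneg _) (hψbd x))
  have hψint : Integrable (fun x => w lam' x * ψ x) P0 := hwint lam' ψ hψmeas Bψ hψbd
  have hgap0 : ∫ x, (w lam' x * (ψ x * Real.exp (ψ x)) - w lam' x * ψ x) ∂P0 = 0 := by
    rw [integral_sub hψeint hψint, hψexp, hψlam', sub_self]
  have hgapnn : 0 ≤ᵐ[P0] fun x => w lam' x * (ψ x * Real.exp (ψ x)) - w lam' x * ψ x := by
    refine Filter.Eventually.of_forall fun x => ?_
    exact sub_nonneg.2 (mul_le_mul_of_nonneg_left (le_self_mul_exp (ψ x)) (hwnn lam' x))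
  have hgapae : (fun x => w lam' x * (ψ x * Real.exp (ψ x)) - w lam' x * ψ x) =ᵐ[P0] 0 :=
    (integral_eq_zero_iff_of_nonneg_ae hgapnn (hψeint.sub hψint)).1 hgap0
  -- conclude φ = m a.e., contradiction
  refine hindep a ha0 ⟨m, ?_⟩
  filter_upwards [hgapae] with x hx
  simp only [Pi.zero_apply] at hx
  have hw' : w lam' x ≠ 0 := (hwpos lam' x).ne'
  have h1 : ψ x * Real.exp (ψ x) = ψ x := by
    have : w lam' x * (ψ x * Real.exp (ψ x)) = w lam' x * ψ x := by linarith
    exact mul_left_cancel₀ hw' this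
  have h4 : ψ x * (Real.exp (ψ x) - 1) = 0 := by
    rw [mul_sub, mul_one, h1, sub_self]
  have h2 : ψ x = 0 := by
    rcases mul_eq_zero.1 h4 with h | h
    · exact h
    · exact (Real.exp_eq_one_iff _).1 (by linarith)
  have : φ x = m := by simpa [hψ, sub_eq_zero] using h2
  simpa [hφ] using this
end

section
/- Fix i ∈ {1, …, n}, f_0 ∈ ℝ, and let T = {x ∈ X : f_i(x) ≥ f_0}. Assume 0 < P0(T) < 1. Then, holding the components λ_j for j ≠ i fixed, lim_{λ_i → −∞} Q_λ(T) = 0 and lim_{λ_i → +∞} Q_λ(T) = 1. -/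
open MeasureTheory Filter

lemma gibbs_aux_integrable {X : Type*} [MeasurableSpace X] (P0 : Measure X)
    [IsProbabilityMeasure P0] {g : X → ℝ} (hg : Measurable g) {K : ℝ}
    (hK : ∀ x, |g x| ≤ K) : Integrable (fun x => Real.exp (g x)) P0 := by
  refine (integrable_const (Real.exp K)).mono' hg.exp.aestronglyMeasurable ?_
  filter_upwards with x
  rw [Real.norm_eq_abs, abs_of_pos (Real.exp_pos _)]
  exact Real.exp_le_exp.2 ((le_abs_self _).trans (hK x))

lemma gibbs_aux_setIntegral_exp_pos {X : Type*} [MeasurableSpace X] {P0 : Measure X}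
    {g : X → ℝ} {s : Set X} (hint : IntegrableOn (fun x => Real.exp (g x)) s P0)
    (hs : 0 < P0 s) : 0 < ∫ x in s, Real.exp (g x) ∂P0 := by
  rw [integral_pos_iff_support_of_nonneg_ae
    (Filter.Eventually.of_forall fun x => (Real.exp_pos _).le) hint]
  have hsupp : (Function.support fun x => Real.exp (g x)) = Set.univ :=
    Set.eq_univ_of_forall fun x => (Real.exp_pos _).ne'
  rw [hsupp]
  simpa using hs

lemma gibbs_apply {X : Type*} [MeasurableSpace X] (P0 : Measure X)
    [IsProbabilityMeasure P0] {n : ℕ} (f : Fin n → X → ℝ)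
    (hmeas : ∀ i, Measurable (f i)) (hbd : ∃ C : ℝ, ∀ i x, |f i x| ≤ C)
    (lam : Fin n → ℝ) (T : Set X) (hT : MeasurableSet T) :
    gibbsMeasure P0 f lam T =
      ENNReal.ofReal ((∫ x in T, Real.exp (∑ j, lam j * f j x) ∂P0) /
        ((∫ x in T, Real.exp (∑ j, lam j * f j x) ∂P0) +
          (∫ x in Tᶜ, Real.exp (∑ j, lam j * f j x) ∂P0))) := by
  obtain ⟨C, hC⟩ := hbd
  set e : X → ℝ := fun x => Real.exp (∑ j, lam j * f j x) with he
  have hesum : Measurable fun x => ∑ j, lam j * f j x :=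
    Finset.measurable_sum _ fun j _ => (hmeas j).const_mul _
  have heint : Integrable e P0 := by
    refine gibbs_aux_integrable P0 hesum (K := ∑ j, |lam j| * |C|) fun x => ?_
    refine (Finset.abs_sum_le_sum_abs _ _).trans ?_
    refine Finset.sum_le_sum fun j _ => ?_
    rw [abs_mul]
    exact mul_le_mul_of_nonneg_left ((hC j x).trans (le_abs_self C)) (abs_nonneg _)
  have hZpos : 0 < gibbsZ P0 f lam := by
    have := gibbs_aux_setIntegral_exp_pos (g := fun x => ∑ j, lam j * f j x)
      (s := Set.univ) (P0 := P0) heint.integrableOn (by simp)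
    simpa [gibbsZ] using this
  have hZ : gibbsZ P0 f lam = (∫ x in T, e x ∂P0) + (∫ x in Tᶜ, e x ∂P0) :=
    (integral_add_compl hT heint).symm
  rw [gibbsMeasure, withDensity_apply _ hT]
  have h1 : ∫⁻ x in T, ENNReal.ofReal (e x / gibbsZ P0 f lam) ∂P0 =
      ENNReal.ofReal (∫ x in T, e x / gibbsZ P0 f lam ∂P0) := by
    refine (ofReal_integral_eq_lintegral_ofReal ?_ ?_).symm
    · exact (heint.div_const _).restrict
    · filter_upwards with x
      positivity
  rw [h1, integral_div, ← hZ]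

/-- for `T = {x : f_i(x) ≥ f_0}` with `0 < P0 T < 1`, holding the other
components of `λ` fixed, `Q_λ(T) → 0` as `λ_i → −∞` and `Q_λ(T) → 1` as `λ_i → +∞`. -/
theorem gibbs_threshold_limits
    {X : Type*} [MeasurableSpace X] (P0 : Measure X) [IsProbabilityMeasure P0]
    {n : ℕ} (f : Fin n → X → ℝ)
    (hmeas : ∀ i, Measurable (f i))
    (hbd : ∃ C : ℝ, ∀ i x, |f i x| ≤ C)
    (i : Fin n) (f0 : ℝ)
    (T : Set X) (hTdef : T = {x : X | f0 ≤ f i x})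
    (hT0 : 0 < P0 T) (hT1 : P0 T < 1)
    (lam : Fin n → ℝ) :
    Tendsto (fun t : ℝ => (gibbsMeasure P0 f (Function.update lam i t)) T)
        atBot (nhds 0) ∧
      Tendsto (fun t : ℝ => (gibbsMeasure P0 f (Function.update lam i t)) T)
        atTop (nhds 1) := by
  obtain ⟨C, hC⟩ := hbd
  have hTmeas : MeasurableSet T := by
    rw [hTdef]; exact measurableSet_le measurable_const (hmeas i)
  have hTc : ∀ x ∈ Tᶜ, f i x < f0 := by
    intro x hx
    rw [hTdef] at hx
    exact not_le.1 hx
  have hTmem : ∀ x ∈ T, f0 ≤ f i x := by intro x hx; rw [hTdef] at hx; exact hx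
  set g : X → ℝ := fun x => ∑ j ∈ Finset.univ.erase i, lam j * f j x with hgdef
  have hgmeas : Measurable g := Finset.measurable_sum _ fun j _ => (hmeas j).const_mul _
  set G : ℝ := ∑ j ∈ Finset.univ.erase i, |lam j| * |C| with hGdef
  have hgbd : ∀ x, |g x| ≤ G := by
    intro x
    refine (Finset.abs_sum_le_sum_abs _ _).trans (Finset.sum_le_sum fun j _ => ?_)
    rw [abs_mul]
    exact mul_le_mul_of_nonneg_left ((hC j x).trans (le_abs_self C)) (abs_nonneg _)
  set D : ℝ := |C| + |f0| with hDdef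
  have hfd : ∀ x, |f i x - f0| ≤ D :=
    fun x => (abs_sub _ _).trans (add_le_add ((hC i x).trans (le_abs_self C)) le_rfl)
  set φ : ℝ → X → ℝ := fun t x => Real.exp (t * (f i x - f0) + g x) with hφdef
  have hφmeas : ∀ t, Measurable (φ t) :=
    fun t => ((((hmeas i).sub measurable_const).const_mul t).add hgmeas).exp
  have hφint : ∀ t, Integrable (φ t) P0 := by
    intro t
    refine gibbs_aux_integrable P0
      ((((hmeas i).sub measurable_const).const_mul t).add hgmeas) (K := |t| * D + G)
      fun x => ?_
    refine (abs_add_le _ _).trans (add_le_add ?_ (hgbd x))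
    rw [abs_mul]
    exact mul_le_mul_of_nonneg_left (hfd x) (abs_nonneg _)
  set A : ℝ → ℝ := fun t => ∫ x in T, φ t x ∂P0 with hAdef
  set B : ℝ → ℝ := fun t => ∫ x in Tᶜ, φ t x ∂P0 with hBdef
  have hApos : ∀ t, 0 < A t :=
    fun t => gibbs_aux_setIntegral_exp_pos ((hφint t).integrableOn) hT0
  have hTc0 : 0 < P0 Tᶜ := by
    rw [measure_compl hTmeas (measure_ne_top _ _), measure_univ]
    exact tsub_pos_of_lt hT1
  have hBpos : ∀ t, 0 < B t :=
    fun t => gibbs_aux_setIntegral_exp_pos ((hφint t).integrableOn) hTc0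
  have hABpos : ∀ t, 0 < A t + B t := fun t => add_pos (hApos t) (hBpos t)
  -- the key formula
  have key : ∀ t, (gibbsMeasure P0 f (Function.update lam i t)) T =
      ENNReal.ofReal (A t / (A t + B t)) := by
    intro t
    rw [gibbs_apply P0 f hmeas ⟨C, hC⟩ _ T hTmeas]
    have hsum : ∀ x, Real.exp (∑ j, Function.update lam i t j * f j x) =
        Real.exp (t * f0) * φ t x := by
      intro x
      have h1 : ∑ j, Function.update lam i t j * f j x
          = t * f i x + ∑ j ∈ Finset.univ.erase i, lam j * f j x := by
        rw [← Finset.add_sum_erase _ _ (Finset.mem_univ i), Function.update_self]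
        congr 1
        exact Finset.sum_congr rfl fun j hj => by
          rw [Function.update_of_ne (Finset.ne_of_mem_erase hj)]
      rw [h1, ← Real.exp_add]
      congr 1
      simp only [hφdef, hgdef]
      ring
    simp only [hsum]
    rw [integral_const_mul, integral_const_mul, ← mul_add,
      mul_div_mul_left _ _ (Real.exp_ne_zero _)]
  constructor
  · -- atBot
    obtain ⟨ε, hε, S, hSmeas, hSsub, hSpos, hSprop⟩ :
        ∃ ε > (0:ℝ), ∃ S : Set X, MeasurableSet S ∧ S ⊆ Tᶜ ∧ 0 < P0 S ∧ ∀ x ∈ S, f i x ≤ f0 - ε := by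
      set U : ℕ → Set X := fun k => {x | f i x ≤ f0 - 1 / (k + 1)} with hU
      have hUsub : ∀ k, U k ⊆ Tᶜ := by
        intro k x hx
        rw [hTdef]
        intro hx'
        have h1 : (0:ℝ) < 1 / (k + 1) := by positivity
        have h2 : f i x ≤ f0 - 1 / (k + 1) := hx
        simp only [Set.mem_setOf_eq] at hx'
        linarith
      have hcover : Tᶜ ⊆ ⋃ k, U k := by
        intro x hx
        obtain ⟨k, hk⟩ := exists_nat_one_div_lt (sub_pos.2 (hTc x hx))
        exact Set.mem_iUnion.2 ⟨k, by simp only [hU, Set.mem_setOf_eq]; linarith⟩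
      have hk : ∃ k, 0 < P0 (U k) := by
        by_contra h
        push_neg at h
        have h0 : P0 (⋃ k, U k) = 0 :=
          measure_iUnion_null fun k => le_antisymm (h k) (zero_le)
        exact absurd ((measure_mono hcover).trans_eq h0) hTc0.not_ge
      obtain ⟨k, hk⟩ := hk
      exact ⟨1 / (k + 1), by positivity, U k,
        measurableSet_le (hmeas i) measurable_const, hUsub k, hk, fun x hx => hx⟩
    set m : ℝ := (P0 S).toReal with hm
    have hmpos : 0 < m := ENNReal.toReal_pos hSpos.ne' (measure_ne_top _ _)
    have hAle : ∀ t ≤ (0:ℝ), A t ≤ Real.exp G := by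
      intro t ht
      have hP : (P0 T).toReal ≤ 1 := by
        simpa using ENNReal.toReal_mono (by simp) hT1.le
      have hnorm := norm_setIntegral_le_of_norm_le_const (μ := P0) (s := T)
        (f := φ t) (C := Real.exp G) (measure_lt_top _ _) ?_
      · calc A t ≤ ‖A t‖ := le_abs_self _
          _ ≤ Real.exp G * (P0 T).toReal := hnorm
          _ ≤ Real.exp G * 1 := by
              exact mul_le_mul_of_nonneg_left hP (Real.exp_nonneg _)
          _ = Real.exp G := mul_one _
      · intro x hx
        rw [Real.norm_eq_abs, abs_of_pos (Real.exp_pos _)]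
        apply Real.exp_le_exp.2
        have h1 : t * (f i x - f0) ≤ 0 :=
          mul_nonpos_iff.2 (Or.inr ⟨ht, sub_nonneg.2 (hTmem x hx)⟩)
        have h2 : g x ≤ G := (le_abs_self _).trans (hgbd x)
        linarith
    have hBlow : ∀ t ≤ (0:ℝ), Real.exp (-(t * ε) - G) * m ≤ B t := by
      intro t ht
      have h1 : Real.exp (-(t * ε) - G) * m ≤ ∫ x in S, φ t x ∂P0 := by
        refine setIntegral_ge_of_const_le_real hSmeas (measure_ne_top _ _)
          (fun x hx => ?_) ((hφint t).integrableOn)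
        apply Real.exp_le_exp.2
        have h2 : f i x - f0 ≤ -ε := by
          have hxS := hSprop x hx
          linarith
        have h3 : t * (-ε) ≤ t * (f i x - f0) := mul_le_mul_of_nonpos_left h2 ht
        have h4 : -G ≤ g x := neg_le_of_abs_le (hgbd x)
        nlinarith
      refine h1.trans (setIntegral_mono_set ((hφint t).integrableOn) ?_ ?_)
      · filter_upwards with x using (Real.exp_pos _).le
      · exact HasSubset.Subset.eventuallyLE hSsub
    have upper_t : Tendsto (fun t => Real.exp G / (Real.exp (-(t * ε) - G) * m))
        atBot (nhds 0) := by
      have h1 : Tendsto (fun t : ℝ => t * ε + G) atBot atBot :=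
        tendsto_atBot_add_const_right _ G (tendsto_id.atBot_mul_const hε)
      have h2 : Tendsto (fun t : ℝ => Real.exp (t * ε + G)) atBot (nhds 0) :=
        Real.tendsto_exp_atBot.comp h1
      have h3 := h2.const_mul (Real.exp G / m)
      rw [mul_zero] at h3
      refine h3.congr fun t => ?_
      have h4 : Real.exp (-(t * ε) - G) = (Real.exp (t * ε + G))⁻¹ := by
        rw [← Real.exp_neg]; ring_nf
      rw [h4]
      field_simp
    have hq : Tendsto (fun t => A t / (A t + B t)) atBot (nhds 0) := by
      refine tendsto_of_tendsto_of_tendsto_of_le_of_le' tendsto_const_nhds upper_t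
        ?_ ?_
      · filter_upwards with t using div_nonneg (hApos t).le (hABpos t).le
      · filter_upwards [eventually_le_atBot (0:ℝ)] with t ht
        have hb : Real.exp (-(t * ε) - G) * m ≤ A t + B t :=
          (hBlow t ht).trans (le_add_of_nonneg_left (hApos t).le)
        exact div_le_div₀ (Real.exp_nonneg _) (hAle t ht)
          (mul_pos (Real.exp_pos _) hmpos) hb
    have := ENNReal.tendsto_ofReal hq
    simp only [ENNReal.ofReal_zero] at this
    simpa only [key] using this
  · -- atTop
    set a0 : ℝ := Real.exp (-G) * (P0 T).toReal with ha0
    have ha0pos : 0 < a0 :=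
      mul_pos (Real.exp_pos _) (ENNReal.toReal_pos hT0.ne' (measure_ne_top _ _))
    have hAlow : ∀ t, 0 ≤ t → a0 ≤ A t := by
      intro t ht
      refine setIntegral_ge_of_const_le_real hTmeas (measure_ne_top _ _)
        (fun x hx => ?_) ((hφint t).integrableOn)
      apply Real.exp_le_exp.2
      have h1 : 0 ≤ t * (f i x - f0) :=
        mul_nonneg ht (sub_nonneg.2 (hTmem x hx))
      have h2 : -G ≤ g x := neg_le_of_abs_le (hgbd x)
      linarith
    have hB0 : Tendsto B atTop (nhds 0) := by
      have h := tendsto_integral_filter_of_dominated_convergence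
        (μ := P0.restrict Tᶜ) (l := atTop) (F := φ) (f := fun _ => (0:ℝ))
        (bound := fun _ => Real.exp G)
        (Eventually.of_forall fun t => (hφmeas t).aestronglyMeasurable)
        ?_ (integrable_const _) ?_
      · simpa using h
      · filter_upwards [eventually_ge_atTop (0:ℝ)] with t ht
        refine (ae_restrict_iff' hTmeas.compl).2 (Eventually.of_forall fun x hx => ?_)
        rw [Real.norm_eq_abs, abs_of_pos (Real.exp_pos _)]
        apply Real.exp_le_exp.2
        have h1 : t * (f i x - f0) ≤ 0 :=
          mul_nonpos_iff.2 (Or.inl ⟨ht, sub_nonpos.2 (hTc x hx).le⟩)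
        have h2 : g x ≤ G := (le_abs_self _).trans (hgbd x)
        linarith
      · refine (ae_restrict_iff' hTmeas.compl).2 (Eventually.of_forall fun x hx => ?_)
        have hc : f i x - f0 < 0 := sub_neg.2 (hTc x hx)
        have h1 : Tendsto (fun t : ℝ => t * (f i x - f0) + g x) atTop atBot :=
          tendsto_atBot_add_const_right _ _ (tendsto_id.atTop_mul_const_of_neg hc)
        exact Real.tendsto_exp_atBot.comp h1
    have hq : Tendsto (fun t => A t / (A t + B t)) atTop (nhds 1) := by
      have hlow : Tendsto (fun t => 1 - B t / a0) atTop (nhds 1) := by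
        have := tendsto_const_nhds (α := ℝ) (f := atTop) (x := (1:ℝ)) |>.sub
          (hB0.div_const a0)
        simpa using this
      refine tendsto_of_tendsto_of_tendsto_of_le_of_le' hlow tendsto_const_nhds ?_ ?_
      · filter_upwards [eventually_ge_atTop (0:ℝ)] with t ht
        have hsplit : A t / (A t + B t) = 1 - B t / (A t + B t) := by
          have hne := (hABpos t).ne'
          field_simp
          ring
        rw [hsplit]
        have hle : B t / (A t + B t) ≤ B t / a0 := by
          refine div_le_div_of_nonneg_left (hBpos t).le ha0pos ?_
          exact (hAlow t ht).trans (le_add_of_nonneg_right (hBpos t).le)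
        linarith
      · filter_upwards with t
        exact div_le_one_of_le₀ (le_add_of_nonneg_right (hBpos t).le) (hABpos t).le
    have := ENNReal.tendsto_ofReal hq
    simp only [ENNReal.ofReal_one] at this
    simpa only [key] using this
end

section
/- Suppose n < ⌈log₂ d⌉, i.e., 2^n < d. Then for every choice of subsets A_1, …, A_n ⊆ X there exist two distinct elements x0 ≠ x1 of X with identical feature vectors f(x0) = f(x1), and for this x0 every Gibbs distribution satisfies Q_λ({x0}) ≤ 1/2 for all λ ∈ ℝ^n. In other words, with fewer than ⌈log₂ d⌉ binary features there is a choice of true world x0 for which full knowledge acquisition is impossible. -/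
/-- The binary feature vector of `x` given subsets `A_1, …, A_n`:
`f(x) = (1_{A_1}(x), …, 1_{A_n}(x))`. -/
noncomputable def binFeatures {X : Type*} {n : ℕ} (A : Fin n → Set X) (x : X) :
    Fin n → ℝ :=
  fun i => (A i).indicator (fun _ => (1 : ℝ)) x

/-- The Gibbs probability mass function on a finite set `X` with uniform prior and binary
features `1_{A_i}`: `Q_λ({x}) = exp(λ·f(x)) / Σ_y exp(λ·f(y))`. -/
noncomputable def finGibbs {X : Type*} [Fintype X] {n : ℕ} (A : Fin n → Set X)
    (lam : Fin n → ℝ) (x : X) : ℝ :=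
  Real.exp (∑ i, lam i * binFeatures A x i) /
    ∑ y : X, Real.exp (∑ i, lam i * binFeatures A y i)

/-- if `2^n < d = |X|`, then for any choice of binary features `A_1, …, A_n`
there are two distinct worlds `x0 ≠ x1` with identical feature vectors, and for this `x0`
every Gibbs distribution satisfies `Q_λ({x0}) ≤ 1/2`: full knowledge acquisition about `x0`
is impossible. -/
theorem finGibbs_full_knowledge_impossible
    {X : Type*} [Fintype X] (d : ℕ) (hd : Fintype.card X = d) (hd2 : 2 ≤ d)
    (n : ℕ) (hn : 2 ^ n < d) (A : Fin n → Set X) :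
    ∃ x0 x1 : X, x0 ≠ x1 ∧ binFeatures A x0 = binFeatures A x1 ∧
      ∀ lam : Fin n → ℝ, finGibbs A lam x0 ≤ 1 / 2 := by
  classical
  -- pigeonhole: the Bool-valued feature map is not injective
  have hcard : Fintype.card (Fin n → Bool) < Fintype.card X := by
    simp [hd, hn]
  obtain ⟨x0, x1, hne, hfb⟩ :
      ∃ x0 x1 : X, x0 ≠ x1 ∧
        (fun i => decide (x0 ∈ A i)) = (fun i => decide (x1 ∈ A i)) := by
    have := Fintype.exists_ne_map_eq_of_card_lt
      (fun x : X => fun i => decide (x ∈ A i)) hcard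
    obtain ⟨x0, x1, hne, h⟩ := this
    exact ⟨x0, x1, hne, h⟩
  have hfeq : binFeatures A x0 = binFeatures A x1 := by
    funext i
    have h : decide (x0 ∈ A i) = decide (x1 ∈ A i) := congrFun hfb i
    by_cases hx : x0 ∈ A i
    · have hx1 : x1 ∈ A i := by
        by_contra hx1
        simp [hx, hx1] at h
      simp [binFeatures, hx, hx1]
    · have hx1 : x1 ∉ A i := by
        intro hx1
        simp [hx, hx1] at h
      simp [binFeatures, hx, hx1]
  refine ⟨x0, x1, hne, hfeq, fun lam => ?_⟩
  set e : X → ℝ := fun y => Real.exp (∑ i, lam i * binFeatures A y i) with he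
  have hpos : ∀ y, 0 < e y := fun y => Real.exp_pos _
  have hsum_pos : 0 < ∑ y : X, e y :=
    Finset.sum_pos (fun y _ => hpos y) ⟨x0, Finset.mem_univ x0⟩
  have hle : 2 * e x0 ≤ ∑ y : X, e y := by
    have h01 : e x0 + e x1 = ∑ y ∈ ({x0, x1} : Finset X), e y := by
      rw [Finset.sum_pair hne]
    have hsub : ∑ y ∈ ({x0, x1} : Finset X), e y ≤ ∑ y : X, e y := by
      apply Finset.sum_le_sum_of_subset_of_nonneg (Finset.subset_univ _)
      intro y _ _; exact (hpos y).le
    have hex : e x0 = e x1 := by simp [he, hfeq]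
    calc 2 * e x0 = e x0 + e x1 := by rw [← hex]; ring
      _ ≤ ∑ y : X, e y := h01 ▸ hsub
  have : finGibbs A lam x0 = e x0 / ∑ y : X, e y := rfl
  rw [this, div_le_div_iff₀ hsum_pos (by norm_num)]
  linarith
end

section
/- Let T = ∏_{i=1}^n [a_i, b_i] with 0 ≤ a_i < b_i ≤ 1 for each i. Then sup_{λ ∈ ℝ^n} Q_λ(T) = 1 if and only if for every i = 1, …, n at least one of the conditions a_i = 0 or b_i = 1 holds. In particular, if 0 < a_i and b_i < 1 for some i, then there is a constant c < 1 with Q_λ(T) ≤ c for all λ ∈ ℝ^n, so it is not possible to come arbitrarily close to full learning of a proposition with truth set T. -/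
open MeasureTheory

/-- The exponentially tilted density on `[0,1]`: `g_λ(t) = λ e^{λt}/(e^λ − 1)` for `λ ≠ 0`
and `g_0(t) = 1`. -/
noncomputable def tiltDens (l t : ℝ) : ℝ :=
  if l = 0 then 1 else l * Real.exp (l * t) / (Real.exp l - 1)

/-- The Gibbs posterior on the unit cube `[0,1]^n` with uniform prior and one coordinate
feature `f_i(x) = x_i` per coordinate: the product measure with density `∏ i g_{λ_i}(x_i)`. -/
noncomputable def cubeGibbs {n : ℕ} (lam : Fin n → ℝ) : Measure (Fin n → ℝ) :=
  (volume.restrict (Set.univ.pi fun _ : Fin n => Set.Icc (0 : ℝ) 1)).withDensity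
    (fun x => ENNReal.ofReal (∏ i, tiltDens (lam i) (x i)))

lemma lintegral_pi_prod : ∀ {n : ℕ} (μ : Fin n → Measure ℝ), (∀ i, SigmaFinite (μ i)) →
    ∀ (f : Fin n → ℝ → ENNReal), (∀ i, Measurable (f i)) →
    ∫⁻ x, ∏ i, f i (x i) ∂Measure.pi μ = ∏ i, ∫⁻ t, f i t ∂(μ i) := by
  intro n
  induction n with
  | zero =>
      intro μ _ f _
      simp [Measure.pi_empty_univ]
  | succ n ih =>
      intro μ hμ f hf
      haveI := hμ
      have hF : Measurable fun x : Fin (n+1) → ℝ => ∏ i, f i (x i) :=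
        Finset.measurable_prod _ fun i _ => (hf i).comp (measurable_pi_apply i)
      have A := (measurePreserving_piFinSuccAbove μ 0).symm
      rw [← A.lintegral_comp hF]
      simp_rw [MeasurableEquiv.piFinSuccAbove_symm_apply, Fin.insertNthEquiv,
        Equiv.coe_fn_mk, Fin.prod_univ_succ, Fin.insertNth_zero, Fin.zero_succAbove,
        Fin.cons_zero, Fin.cons_succ, cast_eq]
      rw [show (∫⁻ a : ℝ × (Fin n → ℝ), f 0 a.1 * ∏ x : Fin n, f x.succ (a.2 x)
            ∂(μ 0).prod (Measure.pi fun j : Fin n => μ j.succ))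
          = (∫⁻ t, f 0 t ∂ μ 0) * ∫⁻ y, ∏ x : Fin n, f x.succ (y x) ∂Measure.pi fun j : Fin n => μ j.succ from
        lintegral_prod_mul (hf 0).aemeasurable
          (Finset.measurable_prod Finset.univ
            (fun (i : Fin n) _ => (hf i.succ).comp (measurable_pi_apply i))).aemeasurable]
      rw [ih (fun j => μ j.succ) (fun j => hμ j.succ) (fun j => f j.succ) (fun j => hf j.succ)]

noncomputable def tiltF (l x y : ℝ) : ℝ :=
  if l = 0 then y - x else (Real.exp (l * y) - Real.exp (l * x)) / (Real.exp l - 1)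

lemma tilt_nonneg (l t : ℝ) : 0 ≤ tiltDens l t := by
  unfold tiltDens
  split_ifs with hl
  · norm_num
  · rcases lt_or_gt_of_ne hl with h | h
    · rw [div_nonneg_iff]
      right
      constructor
      · exact mul_nonpos_of_nonpos_of_nonneg h.le (Real.exp_pos _).le
      · simpa using Real.exp_le_one_iff.mpr h.le
    · apply div_nonneg
      · positivity
      · simpa using Real.one_le_exp_iff.mpr h.le
        
lemma tilt_cont (l : ℝ) : Continuous (tiltDens l) := by
  unfold tiltDens
  split_ifs with hl
  · exact continuous_const
  · fun_prop

lemma tilt_meas (l : ℝ) : Measurable fun t => ENNReal.ofReal (tiltDens l t) :=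
  ENNReal.measurable_ofReal.comp (tilt_cont l).measurable

lemma oneDim (l x y : ℝ) (hxy : x ≤ y) :
    ∫⁻ t in Set.Icc x y, ENNReal.ofReal (tiltDens l t) = ENNReal.ofReal (tiltF l x y) := by
  rw [← ofReal_integral_eq_lintegral_ofReal ((tilt_cont l).integrableOn_Icc)
    (Filter.Eventually.of_forall fun t => tilt_nonneg l t)]
  congr 1
  rw [integral_Icc_eq_integral_Ioc, ← intervalIntegral.integral_of_le hxy]
  unfold tiltDens tiltF
  split_ifs with hl
  · simp
  · have hderiv : ∀ t ∈ Set.uIcc x y,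
        HasDerivAt (fun t => Real.exp (l * t) / (Real.exp l - 1))
          (l * Real.exp (l * t) / (Real.exp l - 1)) t := by
      intro t _
      have h1 : HasDerivAt (fun t : ℝ => l * t) l t := by
        simpa using (hasDerivAt_id t).const_mul l
      have h2 := (h1.exp).div_const (Real.exp l - 1)
      rw [show l * Real.exp (l * t) / (Real.exp l - 1)
        = Real.exp (l * t) * l / (Real.exp l - 1) by ring]
      exact h2
    rw [intervalIntegral.integral_eq_sub_of_hasDerivAt hderiv
      (Continuous.intervalIntegrable
        (show Continuous fun t : ℝ => l * Real.exp (l * t) / (Real.exp l - 1) by fun_prop) x y)]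
    rw [div_sub_div_same]

lemma cubeGibbs_box {n : ℕ} (lam a b : Fin n → ℝ)
    (hab : ∀ i, 0 ≤ a i ∧ a i ≤ b i ∧ b i ≤ 1) :
    cubeGibbs lam (Set.univ.pi fun i => Set.Icc (a i) (b i))
      = ∏ i, ENNReal.ofReal (tiltF (lam i) (a i) (b i)) := by
  have hT : MeasurableSet (Set.univ.pi fun i => Set.Icc (a i) (b i)) :=
    MeasurableSet.univ_pi fun i => measurableSet_Icc
  unfold cubeGibbs
  rw [withDensity_apply _ hT, Measure.restrict_restrict hT]
  have hsub : (Set.univ.pi fun i => Set.Icc (a i) (b i)) ∩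
      (Set.univ.pi fun _ : Fin n => Set.Icc (0:ℝ) 1)
      = Set.univ.pi fun i => Set.Icc (a i) (b i) :=
    Set.inter_eq_left.mpr (Set.pi_mono fun i _ => Set.Icc_subset_Icc (hab i).1 (hab i).2.2)
  rw [hsub, ← lintegral_indicator hT]
  have hpt : ∀ x : Fin n → ℝ,
      (Set.univ.pi fun i => Set.Icc (a i) (b i)).indicator
        (fun x => ENNReal.ofReal (∏ i, tiltDens (lam i) (x i))) x
      = ∏ i, (Set.Icc (a i) (b i)).indicator
          (fun t => ENNReal.ofReal (tiltDens (lam i) t)) (x i) := by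
    intro x
    by_cases hx : x ∈ Set.univ.pi fun i => Set.Icc (a i) (b i)
    · rw [Set.indicator_of_mem hx, ENNReal.ofReal_prod_of_nonneg
        (fun i _ => tilt_nonneg (lam i) (x i))]
      exact Finset.prod_congr rfl fun i _ =>
        (Set.indicator_of_mem (hx i (Set.mem_univ i))
          (fun t => ENNReal.ofReal (tiltDens (lam i) t))).symm
    · rw [Set.indicator_of_notMem hx]
      rw [Set.mem_univ_pi] at hx
      push_neg at hx
      obtain ⟨i, hi⟩ := hx
      exact (Finset.prod_eq_zero (Finset.mem_univ i) (Set.indicator_of_notMem hi _)).symm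
  simp_rw [hpt]
  rw [show (volume : Measure (Fin n → ℝ)) = Measure.pi fun _ => (volume : Measure ℝ) from
    volume_pi]
  rw [lintegral_pi_prod (fun _ => volume) (fun _ => inferInstance) _
    (fun i => (tilt_meas (lam i)).indicator measurableSet_Icc)]
  refine Finset.prod_congr rfl fun i _ => ?_
  rw [lintegral_indicator measurableSet_Icc, oneDim _ _ _ (hab i).2.1]



lemma tiltF_nonneg (l : ℝ) {x y : ℝ} (hxy : x ≤ y) : 0 ≤ tiltF l x y := by
  unfold tiltF
  split_ifs with hl
  · linarith
  · rcases lt_or_gt_of_ne hl with h | h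
    · rw [show (Real.exp (l * y) - Real.exp (l * x)) / (Real.exp l - 1)
          = (Real.exp (l * x) - Real.exp (l * y)) / (1 - Real.exp l) by
        rw [← neg_div_neg_eq]; ring_nf]
      apply div_nonneg
      · have : Real.exp (l * y) ≤ Real.exp (l * x) :=
          Real.exp_le_exp.mpr (by nlinarith)
        linarith
      · have : Real.exp l < 1 := by
          rw [show (1:ℝ) = Real.exp 0 by simp]
          exact Real.exp_lt_exp.mpr h
        linarith
    · apply div_nonneg
      · have : Real.exp (l * x) ≤ Real.exp (l * y) :=
          Real.exp_le_exp.mpr (by nlinarith)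
        linarith
      · have : (1:ℝ) < Real.exp l := by
          rw [show (1:ℝ) = Real.exp 0 by simp]
          exact Real.exp_lt_exp.mpr h
        linarith

lemma tiltF_le_one (l : ℝ) {x y : ℝ} (hx : 0 ≤ x) (hxy : x ≤ y) (hy : y ≤ 1) :
    tiltF l x y ≤ 1 := by
  unfold tiltF
  split_ifs with hl
  · linarith
  · rcases lt_or_gt_of_ne hl with h | h
    · rw [show (Real.exp (l * y) - Real.exp (l * x)) / (Real.exp l - 1)
          = (Real.exp (l * x) - Real.exp (l * y)) / (1 - Real.exp l) by
        rw [← neg_div_neg_eq]; ring_nf]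
      have h1 : Real.exp l < 1 := by
        rw [show (1:ℝ) = Real.exp 0 by simp]; exact Real.exp_lt_exp.mpr h
      rw [div_le_one (by linarith)]
      have h2 : Real.exp (l * x) ≤ 1 := Real.exp_le_one_iff.mpr (by nlinarith)
      have h3 : Real.exp l ≤ Real.exp (l * y) := Real.exp_le_exp.mpr (by nlinarith)
      linarith
    · have h1 : (1:ℝ) < Real.exp l := by
        rw [show (1:ℝ) = Real.exp 0 by simp]; exact Real.exp_lt_exp.mpr h
      rw [div_le_one (by linarith)]
      have h2 : (1:ℝ) ≤ Real.exp (l * x) := Real.one_le_exp_iff.mpr (by positivity)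
      have h3 : Real.exp (l * y) ≤ Real.exp l := Real.exp_le_exp.mpr (by nlinarith)
      linarith

lemma tiltF_le_bound {a b : ℝ} (ha : 0 < a) (hab : a ≤ b) (hb : b < 1) (l : ℝ) :
    tiltF l a b ≤ max ((b - a) / (1 - a)) ((b - a) / b) := by
  have ha1 : 0 < 1 - a := by linarith
  have hb0 : 0 < b := lt_of_lt_of_le ha hab
  unfold tiltF
  split_ifs with hl
  · refine le_trans ?_ (le_max_left _ _)
    rw [le_div_iff₀ ha1]
    nlinarith
  · rcases lt_or_gt_of_ne hl with h | h
    · -- l < 0 : bound (b-a)/b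
      refine le_trans ?_ (le_max_right _ _)
      have hD : Real.exp l - 1 < 0 := by
        have : Real.exp l < 1 := by
          rw [show (1:ℝ) = Real.exp 0 by simp]; exact Real.exp_lt_exp.mpr h
        linarith
      rw [show (Real.exp (l * b) - Real.exp (l * a)) / (Real.exp l - 1)
          = (Real.exp (l * a) - Real.exp (l * b)) / (1 - Real.exp l) by
        rw [← neg_div_neg_eq]; ring_nf]
      rw [div_le_div_iff₀ (by linarith) hb0]
      -- key exponential inequalities
      have e1 : Real.exp (l * b) = Real.exp (l * a) * Real.exp (l * (b - a)) := by
        rw [← Real.exp_add]; ring_nf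
      have e2 : l * (b - a) + 1 ≤ Real.exp (l * (b - a)) := Real.add_one_le_exp _
      have h1 : (b - a) * (l * Real.exp (l * a)) ≤
          Real.exp (l * b) - Real.exp (l * a) := by
        rw [e1]; nlinarith [Real.exp_pos (l * a)]
      have e3 : Real.exp (l * a) * Real.exp (-(l * a)) = 1 := by
        rw [← Real.exp_add]; ring_nf; exact Real.exp_zero
      have e4 : -(l * a) + 1 ≤ Real.exp (-(l * a)) := Real.add_one_le_exp _
      have h2' : Real.exp (l * a) * (1 - l * a) ≤ 1 := by
        nlinarith [Real.exp_pos (l * a)]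
      have h5 : Real.exp l ≤ Real.exp (l * b) := Real.exp_le_exp.mpr (by nlinarith)
      have h2 : (Real.exp l - 1) - a * (l * Real.exp (l * a)) ≤
          Real.exp (l * b) - Real.exp (l * a) := by nlinarith
      nlinarith [h1, h2, mul_nonneg (sub_nonneg.mpr hab) (neg_nonneg.mpr
        (mul_nonpos_of_nonpos_of_nonneg h.le (Real.exp_pos (l*a)).le))]
    · -- l > 0 : bound (b-a)/(1-a)
      refine le_trans ?_ (le_max_left _ _)
      have hD : 0 < Real.exp l - 1 := by
        have : (1:ℝ) < Real.exp l := by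
          rw [show (1:ℝ) = Real.exp 0 by simp]; exact Real.exp_lt_exp.mpr h
        linarith
      rw [div_le_div_iff₀ hD ha1]
      have e1 : Real.exp (l * a) = Real.exp (l * b) * Real.exp (l * (a - b)) := by
        rw [← Real.exp_add]; ring_nf
      have e2 : l * (a - b) + 1 ≤ Real.exp (l * (a - b)) := Real.add_one_le_exp _
      have h1 : Real.exp (l * b) - Real.exp (l * a) ≤
          (b - a) * (l * Real.exp (l * b)) := by
        rw [e1]; nlinarith [Real.exp_pos (l * b)]
      have e3 : Real.exp l = Real.exp (l * b) * Real.exp (l * (1 - b)) := by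
        rw [← Real.exp_add]; ring_nf
      have e4 : l * (1 - b) + 1 ≤ Real.exp (l * (1 - b)) := Real.add_one_le_exp _
      have h6 : (1:ℝ) ≤ Real.exp (l * a) := Real.one_le_exp_iff.mpr (by positivity)
      have h2 : Real.exp (l * b) - Real.exp (l * a) ≤
          (Real.exp l - 1) - (1 - b) * (l * Real.exp (l * b)) := by
        rw [e3]; nlinarith [Real.exp_pos (l * b)]
      nlinarith [h1, h2, mul_nonneg (sub_nonneg.mpr hab)
        (mul_nonneg h.le (Real.exp_pos (l*b)).le)]

lemma tiltF_low_left {b t : ℝ} (ht : 0 < t) (hb : 0 < b) :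
    1 - Real.exp (-(t * b)) ≤ tiltF (-t) 0 b := by
  unfold tiltF
  rw [if_neg (by linarith)]
  have hv : Real.exp (-t) < 1 := by
    rw [show (1:ℝ) = Real.exp 0 by simp]; exact Real.exp_lt_exp.mpr (by linarith)
  rw [show (Real.exp (-t * b) - Real.exp (-t * 0)) / (Real.exp (-t) - 1)
      = (Real.exp (-t * 0) - Real.exp (-t * b)) / (1 - Real.exp (-t)) by
    rw [← neg_div_neg_eq]; ring_nf]
  rw [le_div_iff₀ (by linarith)]
  have hu : Real.exp (-t * b) ≤ 1 := Real.exp_le_one_iff.mpr (by nlinarith)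
  have hv0 : 0 < Real.exp (-t) := Real.exp_pos _
  simp only [mul_zero, Real.exp_zero]
  have : Real.exp (-(t * b)) = Real.exp (-t * b) := by ring_nf
  rw [this]
  nlinarith

lemma tiltF_low_right {a t : ℝ} (ht : 0 < t) (ha0 : 0 ≤ a) (ha : a < 1) :
    1 - Real.exp (-(t * (1 - a))) ≤ tiltF t a 1 := by
  unfold tiltF
  rw [if_neg (by linarith)]
  have hE : (1:ℝ) < Real.exp t := by
    rw [show (1:ℝ) = Real.exp 0 by simp]; exact Real.exp_lt_exp.mpr ht
  have hA : Real.exp (t * a) ≤ Real.exp t := Real.exp_le_exp.mpr (by nlinarith)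
  have h1 : Real.exp (-(t * (1 - a))) = Real.exp (t * a) / Real.exp (t * 1) := by
    rw [← Real.exp_sub]; ring_nf
  rw [mul_one] at h1 ⊢
  rw [h1, le_div_iff₀ (by linarith)]
  have hq : Real.exp (t * a) / Real.exp t * Real.exp t = Real.exp (t * a) :=
    div_mul_cancel₀ _ (Real.exp_pos t).ne'
  have hq1 : Real.exp (t * a) / Real.exp t ≤ 1 := (div_le_one (Real.exp_pos t)).mpr hA
  have hq0 : 0 ≤ Real.exp (t * a) / Real.exp t := by positivity
  nlinarith [hq, hq1, hq0, hE]


/-- for `T = ∏ i [a_i, b_i]` with `0 ≤ a_i < b_i ≤ 1`, we have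
`sup_λ Q_λ(T) = 1` iff for each `i` either `a_i = 0` or `b_i = 1`; in particular if
`0 < a_i` and `b_i < 1` for some `i`, then `Q_λ(T)` is bounded away from `1` uniformly
in `λ`, so full learning cannot be approached. -/
theorem cubeGibbs_full_learning_iff
    {n : ℕ} (a b : Fin n → ℝ)
    (hab : ∀ i, 0 ≤ a i ∧ a i < b i ∧ b i ≤ 1)
    (T : Set (Fin n → ℝ)) (hTdef : T = Set.univ.pi fun i => Set.Icc (a i) (b i)) :
    ((⨆ lam : Fin n → ℝ, cubeGibbs lam T) = 1 ↔ ∀ i, a i = 0 ∨ b i = 1) ∧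
      ((∃ i, 0 < a i ∧ b i < 1) →
        ∃ c : ENNReal, c < 1 ∧ ∀ lam : Fin n → ℝ, cubeGibbs lam T ≤ c) := by
  subst hTdef
  have key : ∀ lam : Fin n → ℝ, cubeGibbs lam (Set.univ.pi fun i => Set.Icc (a i) (b i))
      = ∏ i, ENNReal.ofReal (tiltF (lam i) (a i) (b i)) :=
    fun lam => cubeGibbs_box lam a b (fun i => ⟨(hab i).1, (hab i).2.1.le, (hab i).2.2⟩)
  have hfac_le_one : ∀ (l : ℝ) (i : Fin n), ENNReal.ofReal (tiltF l (a i) (b i)) ≤ 1 :=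
    fun l i => ENNReal.ofReal_le_one.mpr (tiltF_le_one l (hab i).1 (hab i).2.1.le (hab i).2.2)
  have main2 : (∃ i, 0 < a i ∧ b i < 1) →
      ∃ c : ENNReal, c < 1 ∧ ∀ lam : Fin n → ℝ,
        cubeGibbs lam (Set.univ.pi fun i => Set.Icc (a i) (b i)) ≤ c := by
    rintro ⟨i0, hi0a, hi0b⟩
    refine ⟨ENNReal.ofReal (max ((b i0 - a i0) / (1 - a i0)) ((b i0 - a i0) / (b i0))), ?_, ?_⟩
    · rw [ENNReal.ofReal_lt_one]
      have hb0 : 0 < b i0 := lt_trans hi0a (hab i0).2.1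
      have ha1 : a i0 < 1 := lt_trans (hab i0).2.1 hi0b
      apply max_lt
      · rw [div_lt_one (by linarith)]
        linarith
      · rw [div_lt_one hb0]
        linarith
    · intro lam
      rw [key lam]
      calc ∏ i, ENNReal.ofReal (tiltF (lam i) (a i) (b i))
          ≤ ENNReal.ofReal (tiltF (lam i0) (a i0) (b i0)) := by
            rw [← Finset.mul_prod_erase Finset.univ _ (Finset.mem_univ i0)]
            exact mul_le_of_le_one_right'
              (Finset.prod_le_one' fun i _ => hfac_le_one (lam i) i)
        _ ≤ ENNReal.ofReal (max ((b i0 - a i0) / (1 - a i0)) ((b i0 - a i0) / (b i0))) :=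
            ENNReal.ofReal_le_ofReal
              (tiltF_le_bound hi0a (hab i0).2.1.le hi0b (lam i0))
  refine ⟨⟨?_, ?_⟩, main2⟩
  · intro hsup
    by_contra hc
    push_neg at hc
    obtain ⟨i, hai, hbi⟩ := hc
    have hai' : 0 < a i := lt_of_le_of_ne (hab i).1 (Ne.symm hai)
    have hbi' : b i < 1 := lt_of_le_of_ne (hab i).2.2 hbi
    obtain ⟨c, hc1, hcle⟩ := main2 ⟨i, hai', hbi'⟩
    have hle : (⨆ lam : Fin n → ℝ,
        cubeGibbs lam (Set.univ.pi fun i => Set.Icc (a i) (b i))) ≤ c := iSup_le hcle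
    rw [hsup] at hle
    exact absurd (lt_of_le_of_lt hle hc1) (lt_irrefl _)
  · intro hgood
    apply le_antisymm
    · apply iSup_le
      intro lam
      rw [key lam]
      exact Finset.prod_le_one' fun i _ => hfac_le_one (lam i) i
    · set lamt : ℝ → Fin n → ℝ := fun t i => if a i = 0 then -t else t with hlamt
      have hq : ∀ i : Fin n, Filter.Tendsto (fun t => tiltF (lamt t i) (a i) (b i))
          Filter.atTop (nhds (1 : ℝ)) := by
        intro i
        by_cases hA : a i = 0
        · have hbpos : 0 < b i := hA ▸ (hab i).2.1
          have hmul : Filter.Tendsto (fun t : ℝ => t * b i) Filter.atTop Filter.atTop :=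
            Filter.Tendsto.atTop_mul_const hbpos Filter.tendsto_id
          have h0 : Filter.Tendsto (fun t : ℝ => Real.exp (-(t * b i)))
              Filter.atTop (nhds 0) :=
            Real.tendsto_exp_atBot.comp (Filter.tendsto_neg_atTop_atBot.comp hmul)
          have hlow : Filter.Tendsto (fun t : ℝ => 1 - Real.exp (-(t * b i)))
              Filter.atTop (nhds 1) := by
            simpa using tendsto_const_nhds.sub h0
          refine tendsto_of_tendsto_of_tendsto_of_le_of_le' hlow tendsto_const_nhds ?_ ?_
          · filter_upwards [Filter.eventually_ge_atTop (1 : ℝ)] with t ht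
            have h1 : lamt t i = -t := by simp [hlamt, hA]
            rw [h1, hA]
            exact tiltF_low_left (lt_of_lt_of_le one_pos ht) hbpos
          · exact Filter.Eventually.of_forall fun t =>
              tiltF_le_one _ (hab i).1 (hab i).2.1.le (hab i).2.2
        · have hB : b i = 1 := (hgood i).resolve_left hA
          have hA1 : a i < 1 := hB ▸ (hab i).2.1
          have hmul : Filter.Tendsto (fun t : ℝ => t * (1 - a i)) Filter.atTop Filter.atTop :=
            Filter.Tendsto.atTop_mul_const (by linarith) Filter.tendsto_id
          have h0 : Filter.Tendsto (fun t : ℝ => Real.exp (-(t * (1 - a i))))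
              Filter.atTop (nhds 0) :=
            Real.tendsto_exp_atBot.comp (Filter.tendsto_neg_atTop_atBot.comp hmul)
          have hlow : Filter.Tendsto (fun t : ℝ => 1 - Real.exp (-(t * (1 - a i))))
              Filter.atTop (nhds 1) := by
            simpa using tendsto_const_nhds.sub h0
          refine tendsto_of_tendsto_of_tendsto_of_le_of_le' hlow tendsto_const_nhds ?_ ?_
          · filter_upwards [Filter.eventually_ge_atTop (1 : ℝ)] with t ht
            have h1 : lamt t i = t := by simp [hlamt, hA]
            rw [h1, hB]
            exact tiltF_low_right (lt_of_lt_of_le one_pos ht) (hab i).1 hA1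
          · exact Filter.Eventually.of_forall fun t =>
              tiltF_le_one _ (hab i).1 (hab i).2.1.le (hab i).2.2
      have hreal : Filter.Tendsto (fun t => ∏ i, tiltF (lamt t i) (a i) (b i))
          Filter.atTop (nhds 1) := by
        have := tendsto_finset_prod Finset.univ (fun i _ => hq i)
        simpa using this
      have henn : Filter.Tendsto
          (fun t => cubeGibbs (lamt t) (Set.univ.pi fun i => Set.Icc (a i) (b i)))
          Filter.atTop (nhds (1 : ENNReal)) := by
        have h2 := ENNReal.tendsto_ofReal hreal
        rw [ENNReal.ofReal_one] at h2
        convert h2 using 2 with t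
        rw [key (lamt t), ENNReal.ofReal_prod_of_nonneg
          (fun i _ => tiltF_nonneg _ (hab i).2.1.le)]
      exact le_of_tendsto henn (Filter.Eventually.of_forall fun t =>
        le_iSup (fun lam : Fin n → ℝ =>
          cubeGibbs lam (Set.univ.pi fun i => Set.Icc (a i) (b i))) (lamt t))
end

section
/- For every x0 ∈ [0,1]^m there exists a sequence of parameter vectors (α^(k), β^(k)) ∈ ℝ^m × ℝ^m such that the product measures Q_{α^(k), β^(k)} converge weakly to the point mass δ_{x0} as k → ∞. Consequently, for every measurable set T ⊆ [0,1]^m whose interior (relative to [0,1]^m) contains x0, one has sup_{α, β ∈ ℝ^m} Q_{α,β}(T) = 1; that is, with one linear and one quadratic feature per coordinate it is possible to come arbitrarily close to full learning and full knowledge acquisition about any x0 interior to the truth set. -/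
open MeasureTheory Filter BoundedContinuousFunction

/-- The density on `[0,1]` with one linear and one quadratic feature:
`h_{α,β}(t) = e^{αt + βt²} / ∫₀¹ e^{αs + βs²} ds`. -/
noncomputable def quadDens (a b t : ℝ) : ℝ :=
  Real.exp (a * t + b * t ^ 2) / ∫ s in Set.Icc (0 : ℝ) 1, Real.exp (a * s + b * s ^ 2)

/-- The Gibbs posterior on `[0,1]^m` with uniform prior and two features `x_i, x_i²` per
coordinate: the product measure with density `∏ i h_{α_i, β_i}(x_i)`. -/
noncomputable def cubeGibbs2 {m : ℕ} (al be : Fin m → ℝ) : Measure (Fin m → ℝ) :=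
  (volume.restrict (Set.univ.pi fun _ : Fin m => Set.Icc (0 : ℝ) 1)).withDensity
    (fun x => ENNReal.ofReal (∏ i, quadDens (al i) (be i) (x i)))

namespace CubeGibbs2Aux

open Set

lemma contExpQuad (a b : ℝ) : Continuous fun t : ℝ => Real.exp (a * t + b * t ^ 2) := by
  fun_prop

lemma intOnExpQuad (a b : ℝ) :
    IntegrableOn (fun t : ℝ => Real.exp (a * t + b * t ^ 2)) (Icc (0:ℝ) 1) :=
  (contExpQuad a b).integrableOn_Icc

lemma denomPos (a b : ℝ) :
    0 < ∫ s in Icc (0:ℝ) 1, Real.exp (a * s + b * s ^ 2) := by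
  rw [setIntegral_pos_iff_support_of_nonneg_ae
      (Eventually.of_forall fun t => (Real.exp_pos _).le) (intOnExpQuad a b)]
  have : Function.support (fun t : ℝ => Real.exp (a * t + b * t ^ 2)) = univ := by
    ext t; simp [Function.mem_support, (Real.exp_pos _).ne']
  rw [this, univ_inter, Real.volume_Icc]
  norm_num

lemma quadDens_nonneg (a b t : ℝ) : 0 ≤ quadDens a b t :=
  div_nonneg (Real.exp_pos _).le (denomPos a b).le

lemma quadDens_cont (a b : ℝ) : Continuous (quadDens a b) :=
  (contExpQuad a b).div_const _

lemma quadDens_integrableOn (a b : ℝ) (s : Set ℝ) (hs : s ⊆ Icc 0 1) :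
    IntegrableOn (quadDens a b) s :=
  (((quadDens_cont a b).integrableOn_Icc (a := (0:ℝ)) (b := 1)).mono_set hs)

lemma quadDens_integral_one (a b : ℝ) : ∫ t in Icc (0:ℝ) 1, quadDens a b t = 1 := by
  unfold quadDens
  rw [integral_div, div_self (denomPos a b).ne']

lemma quadDens_lintegral (a b : ℝ) {s : Set ℝ} (hs : s ⊆ Icc 0 1) :
    ∫⁻ t in s, ENNReal.ofReal (quadDens a b t)
      = ENNReal.ofReal (∫ t in s, quadDens a b t) :=
  (ofReal_integral_eq_lintegral_ofReal (quadDens_integrableOn a b s hs)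
    (Eventually.of_forall fun t => quadDens_nonneg a b t)).symm

lemma quadDens_lintegral_one (a b : ℝ) :
    ∫⁻ t in Icc (0:ℝ) 1, ENNReal.ofReal (quadDens a b t) = 1 := by
  rw [quadDens_lintegral a b le_rfl, quadDens_integral_one]; simp

lemma quadDens_meas (a b : ℝ) : Measurable fun t => ENNReal.ofReal (quadDens a b t) :=
  ENNReal.measurable_ofReal.comp (quadDens_cont a b).measurable

lemma lintegral_pi_prod {m : ℕ} (g : Fin m → ℝ → ENNReal) (hg : ∀ i, Measurable (g i)) :
    ∫⁻ x : Fin m → ℝ, ∏ i, g i (x i) = ∏ i, ∫⁻ t, g i t := by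
  induction m with
  | zero => simp [volume_pi, Measure.pi_of_empty]
  | succ n ih =>
    have hmp := (measurePreserving_piFinSuccAbove (fun _ : Fin (n+1) => (volume : Measure ℝ)) 0).symm
    rw [volume_pi, ← hmp.lintegral_comp_emb (MeasurableEquiv.measurableEmbedding _)]
    have : ∀ (p : ℝ × (Fin n → ℝ)),
        (∏ i, g i (((MeasurableEquiv.piFinSuccAbove (fun _ : Fin (n+1) => ℝ) 0).symm p) i))
        = g 0 p.1 * ∏ j, g (Fin.succ j) (p.2 j) := by
      intro p
      rw [Fin.prod_univ_succ]
      simp [MeasurableEquiv.piFinSuccAbove_symm_apply, Fin.insertNthEquiv]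
    simp_rw [this]
    rw [lintegral_prod_mul (f := g 0) (g := fun y : Fin n → ℝ => ∏ j, g (Fin.succ j) (y j))
      (hg 0).aemeasurable
      ((Finset.measurable_prod _ fun j _ => (hg j.succ).comp (measurable_pi_apply j)).aemeasurable)]
    rw [← volume_pi, ih (fun j => g (Fin.succ j)) (fun j => hg _), Fin.prod_univ_succ]

lemma lintegral_pi_set_prod {m : ℕ} (t : Fin m → Set ℝ) (ht : ∀ i, MeasurableSet (t i))
    (g : Fin m → ℝ → ENNReal) (hg : ∀ i, Measurable (g i)) :
    ∫⁻ x in Set.univ.pi t, ∏ i, g i (x i) = ∏ i, ∫⁻ s in t i, g i s := by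
  rw [← lintegral_indicator (MeasurableSet.univ_pi ht)]
  have key : ∀ x : Fin m → ℝ,
      (Set.univ.pi t).indicator (fun x => ∏ i, g i (x i)) x
        = ∏ i, (t i).indicator (g i) (x i) := by
    intro x
    by_cases hx : x ∈ Set.univ.pi t
    · rw [Set.indicator_of_mem hx]
      exact Finset.prod_congr rfl fun i _ =>
        (Set.indicator_of_mem (hx i (Set.mem_univ i)) _).symm
    · rw [Set.indicator_of_notMem hx]
      obtain ⟨i, hi⟩ : ∃ i, x i ∉ t i := by
        by_contra hall
        push_neg at hall
        exact hx fun i _ => hall i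
      exact (Finset.prod_eq_zero (Finset.mem_univ i)
        (by rw [Set.indicator_of_notMem hi])).symm
  simp_rw [key]
  rw [lintegral_pi_prod _ (fun i => (hg i).indicator (ht i))]
  exact Finset.prod_congr rfl fun i _ => lintegral_indicator (ht i) _

lemma cubeGibbs2_apply {m : ℕ} (al be : Fin m → ℝ) {A : Set (Fin m → ℝ)}
    (hA : MeasurableSet A) :
    cubeGibbs2 al be A
      = ∫⁻ x in A ∩ (Set.univ.pi fun _ : Fin m => Set.Icc (0 : ℝ) 1),
          ∏ i, ENNReal.ofReal (quadDens (al i) (be i) (x i)) := by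
  rw [cubeGibbs2, withDensity_apply _ hA, Measure.restrict_restrict hA]
  refine setLIntegral_congr_fun (hA.inter (MeasurableSet.univ_pi fun _ => measurableSet_Icc))
    (fun x _ => ?_)
  rw [ENNReal.ofReal_prod_of_nonneg fun i _ => quadDens_nonneg _ _ _]

lemma cubeGibbs2_isProb {m : ℕ} (al be : Fin m → ℝ) :
    IsProbabilityMeasure (cubeGibbs2 al be) := by
  constructor
  rw [cubeGibbs2_apply al be MeasurableSet.univ, Set.univ_inter,
    lintegral_pi_set_prod _ (fun _ => measurableSet_Icc) _ (fun i => quadDens_meas _ _)]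
  simp [quadDens_lintegral_one]

lemma cubeGibbs2_compl_cube {m : ℕ} (al be : Fin m → ℝ) :
    cubeGibbs2 al be (Set.univ.pi fun _ : Fin m => Set.Icc (0 : ℝ) 1)ᶜ = 0 := by
  rw [cubeGibbs2_apply al be (MeasurableSet.univ_pi fun _ => measurableSet_Icc).compl,
    Set.compl_inter_self]
  simp

lemma cubeGibbs2_coord {m : ℕ} (al be : Fin m → ℝ) (i₀ : Fin m) {B : Set ℝ}
    (hB : MeasurableSet B) :
    cubeGibbs2 al be ((fun x => x i₀) ⁻¹' B)
      = ∫⁻ t in B ∩ Icc (0:ℝ) 1, ENNReal.ofReal (quadDens (al i₀) (be i₀) t) := by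
  rw [cubeGibbs2_apply al be ((measurable_pi_apply i₀) hB)]
  have hset : (fun x : Fin m → ℝ => x i₀) ⁻¹' B ∩ (Set.univ.pi fun _ => Icc (0:ℝ) 1)
      = Set.univ.pi (fun j => if j = i₀ then B ∩ Icc (0:ℝ) 1 else Icc (0:ℝ) 1) := by
    ext x
    simp only [Set.mem_inter_iff, Set.mem_preimage, Set.mem_pi, Set.mem_univ, true_implies]
    constructor
    · rintro ⟨hb, hc⟩ j
      by_cases hj : j = i₀ <;> simp [hj, hb, hc j, hc i₀]
    · intro hj
      have h0 : x i₀ ∈ B ∩ Icc (0:ℝ) 1 := by simpa using hj i₀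
      refine ⟨h0.1, fun j => ?_⟩
      have := hj j
      by_cases h : j = i₀
      · subst h
        have h1 : x j ∈ B ∩ Icc (0:ℝ) 1 := by simpa using this
        exact h1.2
      · simpa [h] using this
  rw [hset, lintegral_pi_set_prod _ (fun j => by split <;> exact
      (by first | exact hB.inter measurableSet_Icc | exact measurableSet_Icc))
    _ (fun i => quadDens_meas _ _)]
  rw [Finset.prod_eq_single i₀ (fun j _ hj => by rw [if_neg hj, quadDens_lintegral_one])
    (fun h => absurd (Finset.mem_univ i₀) h)]
  rw [if_pos rfl]

lemma far_bound {c : ℝ} (hc : c ∈ Icc (0:ℝ) 1) {ε : ℝ} (hε : 0 < ε) (k : ℕ) :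
    ∫ t in {t : ℝ | ε ≤ |t - c|} ∩ Icc 0 1, quadDens (2*k*c) (-(k:ℝ)) t
      ≤ (min ε 1 / 2)⁻¹ * Real.exp ((min ε 1 / 2)^2 - ε^2) ^ k := by
  simp only [mem_Icc] at hc
  set δ : ℝ := min ε 1 / 2 with hδdef
  have hδpos : 0 < δ := by rw [hδdef]; positivity
  have hδle : δ ≤ 1/2 := by
    rw [hδdef]; have : min ε 1 ≤ 1 := min_le_right _ _; linarith
  have hδε : δ < ε := by
    rw [hδdef]
    rcases le_total ε 1 with h | h
    · rw [min_eq_left h]; linarith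
    · rw [min_eq_right h]; linarith
  set g : ℝ → ℝ := fun t => Real.exp (-(k:ℝ) * (t - c)^2) with hgdef
  have hgcont : Continuous g := by fun_prop
  have hfg : ∀ t : ℝ, Real.exp ((2*(k:ℝ)*c) * t + (-(k:ℝ)) * t ^ 2)
      = Real.exp ((k:ℝ) * c^2) * g t := by
    intro t
    rw [hgdef, ← Real.exp_add]
    congr 1
    ring
  set G : ℝ := ∫ s in Icc (0:ℝ) 1, g s with hGdef
  have hD : (∫ s in Icc (0:ℝ) 1, Real.exp ((2*(k:ℝ)*c) * s + (-(k:ℝ)) * s ^ 2))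
      = Real.exp ((k:ℝ) * c^2) * G := by
    rw [hGdef, ← MeasureTheory.integral_const_mul]
    exact setIntegral_congr_fun measurableSet_Icc fun t _ => hfg t
  have hqd : ∀ t : ℝ, quadDens (2*k*c) (-(k:ℝ)) t = g t / G := by
    intro t
    rw [quadDens, hD, hfg t, mul_div_mul_left _ _ (Real.exp_ne_zero _)]
  have hgint : IntegrableOn g (Icc (0:ℝ) 1) := hgcont.integrableOn_Icc
  set J : Set ℝ := if c ≤ 1/2 then Icc c (c+δ) else Icc (c-δ) c with hJdef
  have hJsub : J ⊆ Icc (0:ℝ) 1 := by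
    rw [hJdef]; split
    · exact Icc_subset_Icc hc.1 (by linarith)
    · next h => push_neg at h; exact Icc_subset_Icc (by linarith) hc.2
  have hJmeas : MeasurableSet J := by rw [hJdef]; split <;> exact measurableSet_Icc
  have hJvol : volume J = ENNReal.ofReal δ := by
    rw [hJdef]; split <;> rw [Real.volume_Icc] <;> ring_nf
  have hJprop : ∀ t ∈ J, Real.exp (-(k:ℝ) * δ^2) ≤ g t := by
    intro t ht
    rw [hgdef]
    apply Real.exp_le_exp.mpr
    have habs : |t - c| ≤ δ := by
      rw [hJdef] at ht
      rw [abs_le]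
      split at ht <;> simp only [mem_Icc] at ht <;> constructor <;> linarith [ht.1, ht.2]
    have hsq : (t - c)^2 ≤ δ^2 := sq_le_sq' (by linarith [(abs_le.mp habs).1]) (abs_le.mp habs).2
    nlinarith [Nat.cast_nonneg (α := ℝ) k]
  have hGlow : δ * Real.exp (-(k:ℝ) * δ^2) ≤ G := by
    have h1 : Real.exp (-(k:ℝ) * δ^2) * (volume J).toReal ≤ ∫ t in J, g t :=
      setIntegral_ge_of_const_le_real hJmeas (by rw [hJvol]; exact ENNReal.ofReal_ne_top)
        hJprop (hgint.mono_set hJsub)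
    have h2 : ∫ t in J, g t ≤ G :=
      setIntegral_mono_set hgint (Eventually.of_forall fun t => (Real.exp_pos _).le)
        (HasSubset.Subset.eventuallyLE hJsub)
    have h3 : (volume J).toReal = δ := by rw [hJvol, ENNReal.toReal_ofReal hδpos.le]
    rw [h3] at h1
    linarith
  set S : Set ℝ := {t : ℝ | ε ≤ |t - c|} ∩ Icc 0 1 with hSdef
  have hSmeas : MeasurableSet S :=
    ((isClosed_le continuous_const ((continuous_id.sub continuous_const).abs)).measurableSet).inter
      measurableSet_Icc
  have hSvol : volume S ≤ 1 := by
    refine le_trans (measure_mono inter_subset_right) ?_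
    rw [Real.volume_Icc]
    simp
  have hSb : ∀ t ∈ S, g t ≤ Real.exp (-(k:ℝ) * ε^2) := by
    intro t ht
    rw [hgdef]
    apply Real.exp_le_exp.mpr
    have h1 : ε ≤ |t - c| := ht.1
    have hsq : ε^2 ≤ (t - c)^2 := by
      rw [← sq_abs (t - c)]
      exact pow_le_pow_left₀ hε.le h1 2
    nlinarith [Nat.cast_nonneg (α := ℝ) k]
  have hNup : ∫ t in S, g t ≤ Real.exp (-(k:ℝ) * ε^2) := by
    have h1 : ∫ t in S, g t ≤ ∫ _ in S, Real.exp (-(k:ℝ) * ε^2) := by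
      refine setIntegral_mono_on (hgint.mono_set inter_subset_right) ?_ hSmeas hSb
      exact integrableOn_const (lt_of_le_of_lt hSvol ENNReal.one_lt_top).ne
    rw [setIntegral_const, smul_eq_mul, measureReal_def] at h1
    have h2 : (volume S).toReal ≤ 1 := by
      simpa using ENNReal.toReal_mono ENNReal.one_ne_top hSvol
    nlinarith [Real.exp_pos (-(k:ℝ) * ε^2), h1]
  have hchain : ∫ t in S, quadDens (2*k*c) (-(k:ℝ)) t
      ≤ Real.exp (-(k:ℝ) * ε^2) / (δ * Real.exp (-(k:ℝ) * δ^2)) := by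
    calc ∫ t in S, quadDens (2*k*c) (-(k:ℝ)) t = ∫ t in S, g t / G :=
          setIntegral_congr_fun hSmeas fun t _ => hqd t
      _ = (∫ t in S, g t) / G := integral_div _ _
      _ ≤ Real.exp (-(k:ℝ) * ε^2) / (δ * Real.exp (-(k:ℝ) * δ^2)) :=
          div_le_div₀ (Real.exp_pos _).le hNup (by positivity) hGlow
  refine hchain.trans_eq ?_
  rw [div_mul_eq_div_div_swap, ← Real.exp_sub, div_eq_inv_mul]
  congr 1
  rw [← Real.exp_nat_mul]
  congr 1
  ring


noncomputable def alSeq {m : ℕ} (x0 : Fin m → ℝ) : ℕ → Fin m → ℝ := fun k i => 2*(k:ℝ)*(x0 i)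
noncomputable def beSeq {m : ℕ} : ℕ → Fin m → ℝ := fun k _ => -(k:ℝ)

lemma coord_tendsto {m : ℕ} (x0 : Fin m → ℝ) (hx0 : ∀ i, x0 i ∈ Icc (0:ℝ) 1)
    (i₀ : Fin m) {ε : ℝ} (hε : 0 < ε) :
    Tendsto (fun k : ℕ => cubeGibbs2 (alSeq x0 k) (beSeq k)
      ((fun x => x i₀) ⁻¹' {t : ℝ | ε ≤ |t - x0 i₀|})) atTop (nhds 0) := by
  set δ : ℝ := min ε 1 / 2 with hδdef
  have hδpos : 0 < δ := by rw [hδdef]; positivity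
  have hδε : δ < ε := by
    rw [hδdef]
    rcases le_total ε 1 with h | h
    · rw [min_eq_left h]; linarith
    · rw [min_eq_right h]; linarith
  have hBmeas : MeasurableSet {t : ℝ | ε ≤ |t - x0 i₀|} :=
    (isClosed_le continuous_const ((continuous_id.sub continuous_const).abs)).measurableSet
  have hbound : ∀ k : ℕ, cubeGibbs2 (alSeq x0 k) (beSeq k)
      ((fun x => x i₀) ⁻¹' {t : ℝ | ε ≤ |t - x0 i₀|})
      ≤ ENNReal.ofReal (δ⁻¹ * Real.exp (δ^2 - ε^2) ^ k) := by
    intro k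
    rw [cubeGibbs2_coord _ _ i₀ hBmeas, quadDens_lintegral _ _ inter_subset_right]
    exact ENNReal.ofReal_le_ofReal (far_bound (hx0 i₀) hε k)
  have hq1 : Real.exp (δ^2 - ε^2) < 1 := by
    rw [Real.exp_lt_one_iff]
    nlinarith
  have hreal : Tendsto (fun k : ℕ => δ⁻¹ * Real.exp (δ^2 - ε^2) ^ k) atTop (nhds 0) := by
    have := (tendsto_pow_atTop_nhds_zero_of_lt_one (Real.exp_pos _).le hq1).const_mul δ⁻¹
    simpa using this
  have hup : Tendsto (fun k : ℕ => ENNReal.ofReal (δ⁻¹ * Real.exp (δ^2 - ε^2) ^ k))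
      atTop (nhds 0) := by
    have := ENNReal.tendsto_ofReal hreal
    simpa using this
  exact tendsto_of_tendsto_of_tendsto_of_le_of_le tendsto_const_nhds hup
    (fun k => zero_le) hbound

lemma open_tendsto {m : ℕ} (x0 : Fin m → ℝ) (hx0 : ∀ i, x0 i ∈ Icc (0:ℝ) 1)
    {U : Set (Fin m → ℝ)} (hU : IsOpen U) (hxU : x0 ∈ U) :
    Tendsto (fun k : ℕ => cubeGibbs2 (alSeq x0 k) (beSeq k) U) atTop (nhds 1) := by
  obtain ⟨ε, hε, hball⟩ := Metric.isOpen_iff.mp hU x0 hxU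
  set bad : Fin m → Set (Fin m → ℝ) :=
    fun i => (fun x => x i) ⁻¹' {t : ℝ | ε ≤ |t - x0 i|} with hbaddef
  have hsub : (Metric.ball x0 ε)ᶜ ⊆ ⋃ i, bad i := by
    intro x hx
    rw [Set.mem_compl_iff, Metric.mem_ball, dist_pi_lt_iff hε] at hx
    push_neg at hx
    obtain ⟨i, hi⟩ := hx
    exact Set.mem_iUnion.mpr ⟨i, by simpa [hbaddef, Real.dist_eq] using hi⟩
  have hsum : Tendsto (fun k : ℕ => ∑ i, cubeGibbs2 (alSeq x0 k) (beSeq k) (bad i))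
      atTop (nhds 0) := by
    have := tendsto_finset_sum Finset.univ
      (fun (i : Fin m) (_ : i ∈ Finset.univ) => coord_tendsto x0 hx0 i hε)
    rw [Finset.sum_const_zero] at this
    exact this
  have hlow : ∀ k : ℕ, 1 - (∑ i, cubeGibbs2 (alSeq x0 k) (beSeq k) (bad i))
      ≤ cubeGibbs2 (alSeq x0 k) (beSeq k) U := by
    intro k
    haveI := cubeGibbs2_isProb (alSeq x0 k) (beSeq k)
    have hballme : MeasurableSet (Metric.ball x0 ε) := Metric.isOpen_ball.measurableSet
    have h1 : cubeGibbs2 (alSeq x0 k) (beSeq k) (Metric.ball x0 ε)ᶜ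
        ≤ ∑ i, cubeGibbs2 (alSeq x0 k) (beSeq k) (bad i) :=
      le_trans (measure_mono hsub) (le_trans (measure_iUnion_le _) (by rw [tsum_fintype]))
    have h2 : 1 - cubeGibbs2 (alSeq x0 k) (beSeq k) (Metric.ball x0 ε)ᶜ
        ≤ cubeGibbs2 (alSeq x0 k) (beSeq k) (Metric.ball x0 ε) := by
      rw [tsub_le_iff_right]
      have := measure_add_measure_compl (μ := cubeGibbs2 (alSeq x0 k) (beSeq k)) hballme
      rw [measure_univ] at this
      exact le_of_eq this.symm
    calc 1 - (∑ i, cubeGibbs2 (alSeq x0 k) (beSeq k) (bad i))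
        ≤ 1 - cubeGibbs2 (alSeq x0 k) (beSeq k) (Metric.ball x0 ε)ᶜ := tsub_le_tsub_left h1 1
      _ ≤ cubeGibbs2 (alSeq x0 k) (beSeq k) (Metric.ball x0 ε) := h2
      _ ≤ cubeGibbs2 (alSeq x0 k) (beSeq k) U := measure_mono hball
  have hlowt : Tendsto (fun k : ℕ => 1 - (∑ i, cubeGibbs2 (alSeq x0 k) (beSeq k) (bad i)))
      atTop (nhds 1) := by
    have hc : Continuous (fun x : ENNReal => 1 - x) :=
      ENNReal.continuous_sub_left ENNReal.one_ne_top
    have := (hc.tendsto 0).comp hsum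
    rw [tsub_zero] at this
    exact this
  refine tendsto_of_tendsto_of_tendsto_of_le_of_le hlowt tendsto_const_nhds hlow (fun k => ?_)
  haveI := cubeGibbs2_isProb (alSeq x0 k) (beSeq k)
  exact prob_le_one

end CubeGibbs2Aux

open CubeGibbs2Aux

/-- with one linear and one quadratic feature per coordinate, for every
`x0 ∈ [0,1]^m` there are parameter sequences `(α⁽ᵏ⁾, β⁽ᵏ⁾)` with `Q_{α⁽ᵏ⁾,β⁽ᵏ⁾} → δ_{x0}`
weakly; consequently, for every measurable `T` whose interior relative to `[0,1]^m`
contains `x0`, `sup_{α,β} Q_{α,β}(T) = 1`: full learning and full knowledge acquisition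
can be approached arbitrarily closely. -/
theorem cubeGibbs2_full_knowledge
    {m : ℕ} (x0 : Fin m → ℝ) (hx0 : ∀ i, x0 i ∈ Set.Icc (0 : ℝ) 1) :
    (∃ al be : ℕ → Fin m → ℝ,
      ∀ h : (Fin m → ℝ) →ᵇ ℝ,
        Tendsto (fun k => ∫ x, h x ∂(cubeGibbs2 (al k) (be k))) atTop (nhds (h x0))) ∧
    ∀ T : Set (Fin m → ℝ), MeasurableSet T →
      (∃ U : Set (Fin m → ℝ), IsOpen U ∧ x0 ∈ U ∧
        U ∩ (Set.univ.pi fun _ : Fin m => Set.Icc (0 : ℝ) 1) ⊆ T) →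
      (⨆ p : (Fin m → ℝ) × (Fin m → ℝ), cubeGibbs2 p.1 p.2 T) = 1 := by
  constructor
  · refine ⟨alSeq x0, beSeq, fun h => ?_⟩
    set P : ℕ → ProbabilityMeasure (Fin m → ℝ) :=
      fun k => ⟨cubeGibbs2 (alSeq x0 k) (beSeq k), cubeGibbs2_isProb _ _⟩ with hPdef
    set D : ProbabilityMeasure (Fin m → ℝ) := ⟨Measure.dirac x0, inferInstance⟩ with hDdef
    have htend : Tendsto P atTop (nhds D) := by
      apply tendsto_of_forall_isOpen_le_liminf
      intro G hG
      by_cases hx : x0 ∈ G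
      · have hQ := open_tendsto x0 hx0 hG hx
        have hP : Tendsto (fun k => (P k G : NNReal)) atTop (nhds 1) := by
          rw [← ENNReal.tendsto_coe]
          simp_rw [ProbabilityMeasure.ennreal_coeFn_eq_coeFn_toMeasure]
          exact hQ
        rw [hP.liminf_eq]
        exact D.apply_le_one G
      · have hD0 : D G = 0 := by
          have : (D G : ENNReal) = 0 := by
            rw [ProbabilityMeasure.ennreal_coeFn_eq_coeFn_toMeasure]
            show Measure.dirac x0 G = 0
            rw [Measure.dirac_apply' x0 hG.measurableSet]
            simp [Set.indicator_of_notMem hx]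
          exact_mod_cast this
        rw [hD0]
        exact zero_le
    have hint := ProbabilityMeasure.tendsto_iff_forall_integral_tendsto.mp htend h
    have hdirac : ∫ x, h x ∂(D : Measure (Fin m → ℝ)) = h x0 := by
      show ∫ x, h x ∂(Measure.dirac x0) = h x0
      exact integral_dirac _ x0
    rw [hdirac] at hint
    exact hint
  · rintro T hT ⟨U, hUo, hxU, hUT⟩
    apply le_antisymm
    · refine iSup_le fun p => ?_
      haveI := cubeGibbs2_isProb p.1 p.2
      exact prob_le_one
    · have hcube : ∀ k : ℕ,
          cubeGibbs2 (alSeq x0 k) (beSeq k) U ≤ cubeGibbs2 (alSeq x0 k) (beSeq k) T := by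
        intro k
        calc cubeGibbs2 (alSeq x0 k) (beSeq k) U
            ≤ cubeGibbs2 (alSeq x0 k) (beSeq k)
                (U ∩ (Set.univ.pi fun _ : Fin m => Set.Icc (0 : ℝ) 1))
              + cubeGibbs2 (alSeq x0 k) (beSeq k)
                (U \ (Set.univ.pi fun _ : Fin m => Set.Icc (0 : ℝ) 1)) :=
              measure_le_inter_add_diff _ _ _
          _ ≤ cubeGibbs2 (alSeq x0 k) (beSeq k)
                (U ∩ (Set.univ.pi fun _ : Fin m => Set.Icc (0 : ℝ) 1))
              + cubeGibbs2 (alSeq x0 k) (beSeq k)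
                (Set.univ.pi fun _ : Fin m => Set.Icc (0 : ℝ) 1)ᶜ := by
              exact add_le_add_right (measure_mono (Set.diff_subset_compl _ _)) _
          _ = cubeGibbs2 (alSeq x0 k) (beSeq k)
                (U ∩ (Set.univ.pi fun _ : Fin m => Set.Icc (0 : ℝ) 1)) := by
              rw [cubeGibbs2_compl_cube, add_zero]
          _ ≤ cubeGibbs2 (alSeq x0 k) (beSeq k) T := measure_mono hUT
      refine le_of_tendsto (open_tendsto x0 hx0 hUo hxU) (Eventually.of_forall fun k => ?_)
      exact le_trans (hcube k)
        (le_iSup (fun p : (Fin m → ℝ) × (Fin m → ℝ) => cubeGibbs2 p.1 p.2 T)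
          (alSeq x0 k, beSeq k))
end
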